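/- arXiv:2106.07042 — 8 statements merged into one kernel-verified Lean document; each statement's English description precedes it below -/
import Mathlib

section
/- The adjacency spectrum of the k-uniform hyperstar (S_n)^k (the k-th power of the star S_n on n vertices) consists of the eigenvalue -1 with multiplicity (n-1)(k-2), the eigenvalue k-2 with multiplicity n-2, and the two roots of x² - (k-2)x - (n-1)(k-1) = 0, each with multiplicity 1. -/
open Matrix BigOperators

set_option linter.unusedSectionVars false

variable {V : Type*} [Fintype V] [DecidableEq V]

/-- Adjacency matrix of a (multi-)hypergraph given by its multiset of edges:
entry `(i,j)` is the number of edges containing both `i` and `j`, with zero diagonal. -/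
def adjacencyMatrix (E : Multiset (Finset V)) : Matrix V V ℝ :=
  Matrix.of fun i j => if i = j then 0 else ((E.filter (fun e => i ∈ e ∧ j ∈ e)).card : ℝ)

lemma adjacency_isHermitian (E : Multiset (Finset V)) : (adjacencyMatrix E).IsHermitian := by
  unfold Matrix.IsHermitian
  ext i j
  by_cases h : i = j
  · subst h; simp [adjacencyMatrix]
  · simp only [adjacencyMatrix, Matrix.conjTranspose_apply, Matrix.of_apply, h, Ne.symm h,
      if_false, star_trivial]
    congr 1
    exact congrArg Multiset.card (Multiset.filter_congr (fun e _ => and_comm))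

/-- Energy of a (multi-)hypergraph: sum of the absolute values of the adjacency eigenvalues. -/
noncomputable def energy (E : Multiset (Finset V)) : ℝ :=
  ∑ i, |(adjacency_isHermitian E).eigenvalues i|

/-- Degree of a vertex: the number of edges containing it. -/
def hdegree (E : Multiset (Finset V)) (v : V) : ℕ := (E.filter (fun e => v ∈ e)).card

/-- Zagreb index: sum of squares of vertex degrees. -/
def zagreb (E : Multiset (Finset V)) : ℕ := ∑ v, (hdegree E v)^2

/-- The `k`-uniform hyperstar `(S_n)^k`: the power hypergraph of the star on `n` vertices.
The center is `none`; the `j`-th edge consists of the center together with the `k-1`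
vertices `some (j, i)` (the original leaf plus the `k-2` added vertices). -/
def hyperstar (n k : ℕ) : Multiset (Finset (Option (Fin (n-1) × Fin (k-1)))) :=
  (Finset.univ : Finset (Fin (n-1))).val.map
    (fun j => insert none ((Finset.univ : Finset (Fin (k-1))).image (fun i => some (j, i))))

open Polynomial

noncomputable def hf (J i : ℕ) : ℝ := if i < J then 1 else if i = J then -(J:ℝ) else 0

lemma hf_eq_zero {J i : ℕ} (h : J < i) : hf J i = 0 := by
  unfold hf; rw [if_neg (by omega), if_neg (by omega)]

lemma hf_eq_one {J i : ℕ} (h : i < J) : hf J i = 1 := by unfold hf; rw [if_pos h]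

lemma hf_self (J : ℕ) : hf J J = -(J:ℝ) := by unfold hf; rw [if_neg (by omega), if_pos rfl]

lemma sum_range_hf {N J : ℕ} (h : J < N) : ∑ i ∈ Finset.range N, hf J i = 0 := by
  rw [← Finset.sum_subset (Finset.range_subset_range.2 (by omega) : Finset.range (J+1) ⊆ Finset.range N)
    (fun i _ hi => hf_eq_zero (by simp only [Finset.mem_range] at hi ⊢; omega))]
  rw [Finset.sum_range_succ, Finset.sum_congr rfl
    (fun i hi => hf_eq_one (Finset.mem_range.1 hi)), hf_self]
  simp

lemma sum_range_hf_mul_self {N J : ℕ} (h : J < N) :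
    ∑ i ∈ Finset.range N, hf J i * hf J i = (J:ℝ) + (J:ℝ)^2 := by
  rw [← Finset.sum_subset (Finset.range_subset_range.2 (by omega) : Finset.range (J+1) ⊆ Finset.range N)
    (fun i _ hi => by rw [hf_eq_zero (by simp only [Finset.mem_range] at hi ⊢; omega), mul_zero])]
  rw [Finset.sum_range_succ, Finset.sum_congr rfl
    (fun i hi => by rw [hf_eq_one (Finset.mem_range.1 hi), mul_one]), hf_self]
  simp; ring

lemma sum_range_hf_mul_lt {N J J' : ℕ} (hlt : J < J') (h' : J' < N) :
    ∑ i ∈ Finset.range N, hf J i * hf J' i = 0 := by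
  have : ∀ i ∈ Finset.range N, hf J i * hf J' i = hf J i := by
    intro i _
    rcases lt_or_ge J i with hi | hi
    · rw [hf_eq_zero hi, zero_mul]
    · rw [show hf J' i = (1:ℝ) from hf_eq_one (by omega), mul_one]
  rw [Finset.sum_congr rfl this]
  exact sum_range_hf (by omega)

lemma sum_range_hf_mul {N J J' : ℕ} (hne : J ≠ J') (h : J < N) (h' : J' < N) :
    ∑ i ∈ Finset.range N, hf J i * hf J' i = 0 := by
  rcases hne.lt_or_gt with hlt | hlt
  · exact sum_range_hf_mul_lt hlt h'
  · rw [Finset.sum_congr rfl (fun i _ => mul_comm _ _)]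
    exact sum_range_hf_mul_lt hlt h

def Amat (m ℓ : ℕ) : Matrix (Option (Fin m × Fin ℓ)) (Option (Fin m × Fin ℓ)) ℝ :=
  fun v w => match v, w with
  | none, none => 0
  | none, some _ => 1
  | some _, none => 1
  | some p, some q => (if p.1 = q.1 then (1:ℝ) else 0) - (if p = q then 1 else 0)

lemma adjacency_eq_Amat (n k : ℕ) :
    adjacencyMatrix (hyperstar n k) = Amat (n-1) (k-1) := by
  ext v w
  have hcard : ∀ (p : Fin (n-1) → Prop) [DecidablePred p] (v w : Option (Fin (n-1) × Fin (k-1))),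
      True := fun _ _ _ _ => trivial
  rcases v with _ | ⟨a, b⟩ <;> rcases w with _ | ⟨c, d⟩
  · simp [adjacencyMatrix, Amat]
  · simp only [adjacencyMatrix, Amat, Matrix.of_apply, if_neg (nofun : (none : Option (Fin (n-1) × Fin (k-1))) = some (c,d) → False)]
    rw [hyperstar, Multiset.filter_map, Multiset.card_map]
    have : ∀ j : Fin (n-1),
        ((fun e => none ∈ e ∧ some (c, d) ∈ e) ∘ fun j =>
          insert none (Finset.univ.image (fun i => some (j, i)))) j ↔ (j = c) := by
      intro j
      simp [Finset.mem_insert, Finset.mem_image, Prod.ext_iff, eq_comm]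
    rw [Multiset.filter_congr (fun j _ => this j)]
    rw [← Finset.filter_val, Finset.filter_eq' Finset.univ c]
    simp
  · simp only [adjacencyMatrix, Amat, Matrix.of_apply,
      if_neg (nofun : some (a,b) = (none : Option (Fin (n-1) × Fin (k-1))) → False)]
    rw [hyperstar, Multiset.filter_map, Multiset.card_map]
    have : ∀ j : Fin (n-1),
        ((fun e => some (a,b) ∈ e ∧ none ∈ e) ∘ fun j =>
          insert none (Finset.univ.image (fun i => some (j, i)))) j ↔ (j = a) := by
      intro j
      simp [Finset.mem_insert, Finset.mem_image, Prod.ext_iff, eq_comm]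
    rw [Multiset.filter_congr (fun j _ => this j)]
    rw [← Finset.filter_val, Finset.filter_eq' Finset.univ a]
    simp
  · by_cases hpq : (⟨a,b⟩ : Fin (n-1) × Fin (k-1)) = ⟨c,d⟩
    · obtain ⟨h1, h2⟩ := Prod.ext_iff.1 hpq
      simp only at h1 h2
      subst h1; subst h2
      simp [adjacencyMatrix, Amat]
    · have hne : (some (⟨a,b⟩ : Fin (n-1) × Fin (k-1))) ≠ some ⟨c,d⟩ := by
        simpa using hpq
      simp only [adjacencyMatrix, Amat, Matrix.of_apply, if_neg hne, if_neg hpq]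
      rw [hyperstar, Multiset.filter_map, Multiset.card_map]
      have : ∀ j : Fin (n-1),
          ((fun e => some (a,b) ∈ e ∧ some (c,d) ∈ e) ∘ fun j =>
            insert none (Finset.univ.image (fun i => some (j, i)))) j ↔ (j = a ∧ j = c) := by
        intro j
        simp [Finset.mem_insert, Finset.mem_image, Prod.ext_iff, eq_comm]
      rw [Multiset.filter_congr (fun j _ => this j)]
      by_cases hac : a = c
      · subst hac
        simp only [and_self]
        rw [← Finset.filter_val, Finset.filter_eq' Finset.univ a]
        simp
      · have : ∀ j : Fin (n-1), (j = a ∧ j = c) ↔ False := by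
          intro j; constructor
          · rintro ⟨rfl, rfl⟩; exact hac rfl
          · exact False.elim
        rw [Multiset.filter_congr (fun j _ => (this j))]
        simp [Multiset.filter_eq_nil, if_neg hac]

lemma sum_fin_hf {N : ℕ} (j : Fin N) : ∑ a : Fin N, hf (j:ℕ) (a:ℕ) = 0 := by
  rw [Fin.sum_univ_eq_sum_range (fun i => hf (j:ℕ) i)]; exact sum_range_hf j.isLt

lemma sum_fin_hf_mul {N : ℕ} (j j' : Fin N) :
    ∑ a : Fin N, hf (j:ℕ) (a:ℕ) * hf (j':ℕ) (a:ℕ) =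
      if j = j' then (j:ℝ) + (j:ℝ)^2 else 0 := by
  rw [Fin.sum_univ_eq_sum_range (fun i => hf (j:ℕ) i * hf (j':ℕ) i)]
  by_cases h : j = j'
  · subst h; rw [if_pos rfl]; exact sum_range_hf_mul_self j.isLt
  · rw [if_neg h]; exact sum_range_hf_mul (fun hh => h (Fin.ext hh)) j.isLt j'.isLt

noncomputable def Pleaf (m ℓ : ℕ) (c : Fin m × Fin ℓ) (a : Fin m) (b : Fin ℓ) : ℝ :=
  if (c.2:ℕ) = 0 then (if (c.1:ℕ) = 0 then 1 else hf (c.1:ℕ) (a:ℕ))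
  else (if a = c.1 then hf (c.2:ℕ) (b:ℕ) else 0)

noncomputable def Pmat (m ℓ : ℕ) (t₁ t₂ : ℝ) :
    Matrix (Option (Fin m × Fin ℓ)) (Option (Fin m × Fin ℓ)) ℝ :=
  fun v c => match v, c with
  | none, none => t₁
  | some _, none => 1
  | none, some c => if (c.2:ℕ) = 0 ∧ (c.1:ℕ) = 0 then t₂ else 0
  | some p, some c => Pleaf m ℓ c p.1 p.2

noncomputable def Dfun (m ℓ : ℕ) (r₁ r₂ kk : ℝ) : Option (Fin m × Fin ℓ) → ℝ :=
  fun c => match c with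
  | none => r₁
  | some c => if (c.2:ℕ) = 0 then (if (c.1:ℕ) = 0 then r₂ else kk) else -1

lemma AP_eq_PD (m ℓ : ℕ) (t₁ t₂ r₁ r₂ kk : ℝ)
    (hkk : kk = (ℓ:ℝ) - 1) (hr₁ : r₁ = t₁ + kk) (hr₂ : r₂ = t₂ + kk)
    (h1 : t₁ * r₁ = (m:ℝ)*(ℓ:ℝ)) (h2 : t₂ * r₂ = (m:ℝ)*(ℓ:ℝ)) :
    Amat m ℓ * Pmat m ℓ t₁ t₂ = Pmat m ℓ t₁ t₂ * diagonal (Dfun m ℓ r₁ r₂ kk) := by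
  ext v c
  rw [mul_apply, Matrix.mul_diagonal, Fintype.sum_option]
  rw [Fintype.sum_prod_type]
  rcases v with _ | ⟨x, y⟩ <;> rcases c with _ | ⟨j, i⟩
  · -- v = none, c = none
    simp [Amat, Pmat, Dfun, Finset.sum_const, mul_comm, h1]
  · -- v = none, c = some (j,i)
    by_cases hi : (i:ℕ) = 0
    · by_cases hj : (j:ℕ) = 0
      · simp [Amat, Pmat, Dfun, Pleaf, hi, hj, Finset.sum_const, mul_comm, h2]
      · simp only [Amat, Pmat, Dfun, Pleaf, hi, hj, if_true, if_false, and_true, and_false,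
          zero_mul, one_mul, if_pos rfl, ite_false, ite_true, zero_add]
        rw [Finset.sum_comm]
        simp [Finset.sum_const, sum_fin_hf j]
    · simp only [Amat, Pmat, Dfun, Pleaf, hi, if_false, false_and, zero_mul, one_mul, zero_add,
        ite_false]
      have step : ∀ a : Fin m, (∑ b : Fin ℓ, if a = j then hf (i:ℕ) (b:ℕ) else 0) = 0 := by
        intro a; by_cases h : a = j <;> simp [h, sum_fin_hf i]
      rw [Finset.sum_congr rfl (fun a _ => step a)]
      simp
  · -- v = some (x,y), c = none
    simp only [Amat, Pmat, Dfun, one_mul]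
    have step : ∀ a : Fin m, (∑ b : Fin ℓ,
        ((if x = a then (1:ℝ) else 0) - (if (x,y) = (a,b) then 1 else 0)) * 1) =
        (if x = a then (ℓ:ℝ) else 0) - (if x = a then 1 else 0) := by
      intro a
      simp only [mul_one, Prod.mk.injEq, ite_and, Finset.sum_sub_distrib]
      congr 1
      · by_cases h : x = a <;> simp [h]
      · by_cases h : x = a <;> simp [h]
    rw [Finset.sum_congr rfl (fun a _ => step a), Finset.sum_sub_distrib,
      Finset.sum_ite_eq, Finset.sum_ite_eq]
    simp only [Finset.mem_univ, if_true]
    rw [hr₁, hkk]; try ring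
  · -- v = some (x,y), c = some (j,i)
    simp only [Amat, Pmat]
    have step : ∀ a : Fin m, (∑ b : Fin ℓ,
        ((if x = a then (1:ℝ) else 0) - (if (x,y) = (a,b) then 1 else 0)) * Pleaf m ℓ (j,i) a b) =
        (if x = a then ∑ b : Fin ℓ, Pleaf m ℓ (j,i) a b else 0) -
        (if x = a then Pleaf m ℓ (j,i) a y else 0) := by
      intro a
      simp only [Prod.mk.injEq, ite_and, sub_mul, Finset.sum_sub_distrib, ite_mul, one_mul,
        zero_mul]
      congr 1
      · by_cases h : x = a <;> simp [h]
      · by_cases h : x = a <;> simp [h]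
    rw [Finset.sum_congr rfl (fun a _ => step a), Finset.sum_sub_distrib,
      Finset.sum_ite_eq, Finset.sum_ite_eq]
    simp only [Finset.mem_univ, if_true]
    by_cases hi : (i:ℕ) = 0
    · by_cases hj : (j:ℕ) = 0
      · simp only [Dfun, Pleaf, hi, hj, if_true, and_self, ite_true, Finset.sum_const,
          Finset.card_univ, Fintype.card_fin, nsmul_eq_mul, mul_one]
        rw [hr₂, hkk]; try ring
      · simp only [Dfun, Pleaf, hi, hj, if_true, if_false, and_false, ite_true, ite_false,
          Finset.sum_const, Finset.card_univ, Fintype.card_fin, nsmul_eq_mul, mul_one]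
        rw [hkk]; try ring
    · simp only [Dfun, Pleaf, hi, if_false, false_and, ite_false, zero_add]
      have : ∀ a : Fin m, (∑ b : Fin ℓ, if a = j then hf (i:ℕ) (b:ℕ) else 0) = 0 := by
        intro a; by_cases h : a = j <;> simp [h, sum_fin_hf i]
      rw [this x]
      by_cases h : x = j <;> simp [h]

noncomputable def efun (m ℓ : ℕ) (t₁ t₂ : ℝ) : Option (Fin m × Fin ℓ) → ℝ :=
  fun c => match c with
  | none => t₁^2 + (m:ℝ)*(ℓ:ℝ)
  | some c => if (c.2:ℕ) = 0 then (if (c.1:ℕ) = 0 then t₂^2 + (m:ℝ)*(ℓ:ℝ)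
      else (ℓ:ℝ)*(((c.1:ℕ):ℝ)+((c.1:ℕ):ℝ)^2)) else (((c.2:ℕ):ℝ)+((c.2:ℕ):ℝ)^2)

lemma PtP (m ℓ : ℕ) (t₁ t₂ : ℝ) (h3 : t₁*t₂ = -((m:ℝ)*(ℓ:ℝ))) :
    (Pmat m ℓ t₁ t₂)ᵀ * Pmat m ℓ t₁ t₂ = diagonal (efun m ℓ t₁ t₂) := by
  ext c c'
  rw [mul_apply]
  simp only [transpose_apply]
  rw [Fintype.sum_option, Fintype.sum_prod_type]
  rcases c with _ | ⟨j, i⟩ <;> rcases c' with _ | ⟨j', i'⟩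
  · -- none none
    simp [Pmat, efun, Finset.sum_const, diagonal]; ring
  · -- none, some
    rw [diagonal_apply_ne _ (by simp)]
    simp only [Pmat, Pleaf]
    by_cases hi : (i':ℕ) = 0
    · by_cases hj : (j':ℕ) = 0
      · simp only [hi, hj, if_true, and_self, ite_true, mul_one, one_mul, Finset.sum_const,
          Finset.card_univ, Fintype.card_fin, nsmul_eq_mul]
        rw [h3]; push_cast; ring
      · simp only [hi, hj, if_true, if_false, and_false, ite_true, ite_false, mul_zero, one_mul]
        rw [Finset.sum_comm]
        simp [Finset.sum_const, sum_fin_hf j']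
    · simp only [hi, if_false, false_and, ite_false, mul_zero, one_mul, zero_add]
      have : ∀ a : Fin m, (∑ b : Fin ℓ, if a = j' then hf (i':ℕ) (b:ℕ) else 0) = 0 := by
        intro a; by_cases h : a = j' <;> simp [h, sum_fin_hf i']
      rw [Finset.sum_congr rfl (fun a _ => this a)]
      simp
  · -- some, none
    rw [diagonal_apply_ne _ (by simp)]
    simp only [Pmat, Pleaf]
    by_cases hi : (i:ℕ) = 0
    · by_cases hj : (j:ℕ) = 0
      · simp only [hi, hj, if_true, and_self, ite_true, mul_one, one_mul, Finset.sum_const,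
          Finset.card_univ, Fintype.card_fin, nsmul_eq_mul]
        rw [mul_comm] at h3; rw [h3]; push_cast; ring
      · simp only [hi, hj, if_true, if_false, and_false, ite_true, ite_false, zero_mul, mul_one]
        rw [Finset.sum_comm]
        simp [Finset.sum_const, sum_fin_hf j]
    · simp only [hi, if_false, false_and, ite_false, zero_mul, mul_one, zero_add]
      have : ∀ a : Fin m, (∑ b : Fin ℓ, if a = j then hf (i:ℕ) (b:ℕ) else 0) = 0 := by
        intro a; by_cases h : a = j <;> simp [h, sum_fin_hf i]
      rw [Finset.sum_congr rfl (fun a _ => this a)]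
      simp
  · -- some, some
    simp only [Pmat, Pleaf]
    by_cases hi : (i:ℕ) = 0 <;> by_cases hi' : (i':ℕ) = 0
    · by_cases hj : (j:ℕ) = 0 <;> by_cases hj' : (j':ℕ) = 0
      · -- both K1 : equal indices
        have hii : i = i' := Fin.ext (hi.trans hi'.symm)
        have hjj : j = j' := Fin.ext (hj.trans hj'.symm)
        subst hii; subst hjj
        rw [diagonal_apply_eq]
        simp [efun, hi, hj, Finset.sum_const]
        ring
      · -- K1, K2
        rw [diagonal_apply_ne _ (by simp [Prod.ext_iff]; intro h; exact fun _ => hj' (h ▸ hj))]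
        simp only [hi, hi', hj, hj', if_true, if_false, and_self, and_false, ite_true, ite_false,
          mul_zero, one_mul]
        rw [Finset.sum_comm]
        simp [Finset.sum_const, sum_fin_hf j']
      · -- K2, K1
        rw [diagonal_apply_ne _ (by simp [Prod.ext_iff]; intro h; exact fun _ => hj (h ▸ hj'))]
        simp only [hi, hi', hj, hj', if_true, if_false, and_self, and_false, ite_true, ite_false,
          zero_mul, mul_one]
        rw [Finset.sum_comm]
        simp [Finset.sum_const, sum_fin_hf j]
      · -- K2, K2
        simp only [hi, hi', hj, hj', if_true, if_false, and_false, ite_true, ite_false,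
          mul_zero, zero_mul, zero_add]
        have step : ∀ a : Fin m, (∑ _b : Fin ℓ, hf (j:ℕ) (a:ℕ) * hf (j':ℕ) (a:ℕ)) =
            (ℓ:ℝ) * (hf (j:ℕ) (a:ℕ) * hf (j':ℕ) (a:ℕ)) := by
          intro a; simp [Finset.sum_const]
        rw [Finset.sum_congr rfl (fun a _ => step a), ← Finset.mul_sum, sum_fin_hf_mul]
        by_cases h : j = j'
        · subst h
          have : i = i' := Fin.ext (hi.trans hi'.symm)
          subst this
          rw [diagonal_apply_eq]
          simp [efun, hi, hj, if_pos rfl]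
        · rw [diagonal_apply_ne _ (by simp [Prod.ext_iff]; intro hh; exact absurd hh h)]
          simp [h]
    · -- K1/K2, K3
      rw [diagonal_apply_ne _ (by simp [Prod.ext_iff]; intro _ h; exact hi' (h ▸ hi))]
      simp only [hi, hi', if_true, if_false, ite_true, ite_false, and_false, false_and]
      have : ∀ a : Fin m, (∑ b : Fin ℓ,
          (if (j:ℕ) = 0 then (1:ℝ) else hf (j:ℕ) (a:ℕ)) * (if a = j' then hf (i':ℕ) (b:ℕ) else 0)) = 0 := by
        intro a
        by_cases h : a = j'
        · simp only [h, if_true, ite_true, ← Finset.mul_sum]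
          rw [sum_fin_hf i']; ring
        · simp [h]
      rw [Finset.sum_congr rfl (fun a _ => this a)]
      by_cases hj : (j:ℕ) = 0 <;> simp [hj]
    · -- K3, K1/K2
      rw [diagonal_apply_ne _ (by simp [Prod.ext_iff]; intro _ h; exact hi (h ▸ hi'))]
      simp only [hi, hi', if_true, if_false, ite_true, ite_false, and_false, false_and]
      have : ∀ a : Fin m, (∑ b : Fin ℓ,
          (if a = j then hf (i:ℕ) (b:ℕ) else 0) * (if (j':ℕ) = 0 then (1:ℝ) else hf (j':ℕ) (a:ℕ))) = 0 := by
        intro a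
        by_cases h : a = j
        · simp only [h, if_true, ite_true]
          rw [← Finset.sum_mul, sum_fin_hf i]; ring
        · simp [h]
      rw [Finset.sum_congr rfl (fun a _ => this a)]
      by_cases hj' : (j':ℕ) = 0 <;> simp [hj']
    · -- K3, K3
      simp only [hi, hi', if_false, false_and, ite_false, mul_zero, zero_add]
      have step : ∀ a : Fin m, (∑ b : Fin ℓ,
          (if a = j then hf (i:ℕ) (b:ℕ) else 0) * (if a = j' then hf (i':ℕ) (b:ℕ) else 0)) =
          if a = j ∧ a = j' then (if i = i' then ((i:ℕ):ℝ) + ((i:ℕ):ℝ)^2 else 0) else 0 := by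
        intro a
        by_cases h : a = j <;> by_cases h' : a = j' <;>
          simp [h, h', sum_fin_hf_mul i i']
      rw [Finset.sum_congr rfl (fun a _ => step a)]
      by_cases hjj : j = j'
      · subst hjj
        simp only [and_self]
        rw [Finset.sum_ite_eq' Finset.univ j]
        by_cases hii : i = i'
        · subst hii
          rw [diagonal_apply_eq]
          simp [efun, hi]
        · rw [diagonal_apply_ne _ (by simp [Prod.ext_iff]; intro h; exact absurd h hii)]
          simp [hii]
      · have : ∀ a : Fin m, (a = j ∧ a = j') ↔ False := by
          intro a; constructor
          · rintro ⟨rfl, rfl⟩; exact hjj rfl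
          · exact False.elim
        rw [Finset.sum_congr rfl (fun a _ => if_neg (fun hc => (this a).1 hc))]
        rw [diagonal_apply_ne _ (by simp [Prod.ext_iff]; intro h; exact absurd h hjj)]
        simp

lemma univ_option_val {β : Type*} [Fintype β] [DecidableEq β] :
    (Finset.univ : Finset (Option β)).val =
      none ::ₘ (Finset.univ : Finset β).val.map some := by
  rw [univ_option]
  rfl

lemma card_filter_snd0 (m ℓ : ℕ) (hℓ : 1 ≤ ℓ) :
    (Finset.univ.filter (fun c : Fin m × Fin ℓ => (c.2:ℕ) = 0)).card = m := by
  have himg : Finset.univ.filter (fun c : Fin m × Fin ℓ => (c.2:ℕ) = 0) =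
      Finset.univ.image (fun a : Fin m => (a, (⟨0, hℓ⟩ : Fin ℓ))) := by
    ext ⟨a, b⟩
    simp only [Finset.mem_filter, Finset.mem_univ, true_and, Finset.mem_image, Prod.mk.injEq]
    constructor
    · intro h; exact ⟨a, rfl, (Fin.ext h.symm : (⟨0,hℓ⟩ : Fin ℓ) = b)⟩
    · rintro ⟨x, rfl, rfl⟩; rfl
  rw [himg, Finset.card_image_of_injective _ (fun x y hxy => (Prod.mk.injEq _ _ _ _ ▸ hxy).1)]
  simp

lemma card_filter_00 (m ℓ : ℕ) (hm : 1 ≤ m) (hℓ : 1 ≤ ℓ) :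
    (Finset.univ.filter (fun c : Fin m × Fin ℓ => (c.1:ℕ) = 0 ∧ (c.2:ℕ) = 0)).card = 1 := by
  have : Finset.univ.filter (fun c : Fin m × Fin ℓ => (c.1:ℕ) = 0 ∧ (c.2:ℕ) = 0) =
      {((⟨0, hm⟩ : Fin m), (⟨0, hℓ⟩ : Fin ℓ))} := by
    ext ⟨a, b⟩
    simp only [Finset.mem_filter, Finset.mem_univ, true_and, Finset.mem_singleton, Prod.mk.injEq]
    constructor
    · rintro ⟨h1, h2⟩; exact ⟨(Fin.ext h1 : a = ⟨0,hm⟩), (Fin.ext h2 : b = ⟨0,hℓ⟩)⟩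
    · rintro ⟨rfl, rfl⟩; exact ⟨rfl, rfl⟩
  rw [this, Finset.card_singleton]

lemma map_Dfun (m ℓ : ℕ) (hm : 1 ≤ m) (hℓ : 1 ≤ ℓ) (r₁ r₂ kk : ℝ) :
    Multiset.map (Dfun m ℓ r₁ r₂ kk) Finset.univ.val =
      Multiset.replicate (m*(ℓ-1)) (-1:ℝ) + Multiset.replicate (m-1) kk + {r₁, r₂} := by
  rw [univ_option_val, Multiset.map_cons, Multiset.map_map]
  have hdnone : Dfun m ℓ r₁ r₂ kk none = r₁ := rfl
  set d : Fin m × Fin ℓ → ℝ := (Dfun m ℓ r₁ r₂ kk) ∘ some with hd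
  set s : Multiset (Fin m × Fin ℓ) := (Finset.univ : Finset (Fin m × Fin ℓ)).val with hs
  have hs_split : s = Multiset.filter (fun c => (c.2:ℕ) = 0) s +
      Multiset.filter (fun c => ¬ (c.2:ℕ) = 0) s := (Multiset.filter_add_not _ s).symm
  -- the part with i ≠ 0 maps to -1
  have hmap2 : Multiset.map d (Multiset.filter (fun c => ¬ (c.2:ℕ) = 0) s) =
      Multiset.replicate (m*(ℓ-1)) (-1:ℝ) := by
    have hcongr : ∀ c ∈ Multiset.filter (fun c : Fin m × Fin ℓ => ¬ (c.2:ℕ) = 0) s,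
        d c = -1 := by
      intro c hc
      have h2 := (Multiset.mem_filter.1 hc).2
      simp [hd, Dfun, h2]
    rw [Multiset.map_congr rfl hcongr, Multiset.map_const']
    congr 1
    have heq : Multiset.filter (fun c : Fin m × Fin ℓ => ¬ (c.2:ℕ) = 0) s =
        (Finset.univ.filter (fun c : Fin m × Fin ℓ => ¬ (c.2:ℕ) = 0)).val := rfl
    rw [heq, ← Finset.card_def]
    have hadd := Finset.card_filter_add_card_filter_not
      (s := (Finset.univ : Finset (Fin m × Fin ℓ))) (p := fun c => (c.2:ℕ) = 0)
    rw [card_filter_snd0 m ℓ hℓ] at hadd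
    have hcard : (Finset.univ : Finset (Fin m × Fin ℓ)).card = m * ℓ := by
      simp [Finset.card_univ]
    rw [hcard] at hadd
    obtain ⟨ℓ', rfl⟩ : ∃ ℓ', ℓ = ℓ' + 1 := ⟨ℓ - 1, by omega⟩
    have hmul : m * (ℓ' + 1) = m * ℓ' + m := by ring
    simp only [Nat.add_sub_cancel]
    omega
  -- the part with i = 0 splits further
  have hsplit0 : Multiset.filter (fun c : Fin m × Fin ℓ => (c.2:ℕ) = 0) s =
      Multiset.filter (fun c => (c.1:ℕ) = 0)
        (Multiset.filter (fun c : Fin m × Fin ℓ => (c.2:ℕ) = 0) s) +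
      Multiset.filter (fun c => ¬ (c.1:ℕ) = 0)
        (Multiset.filter (fun c : Fin m × Fin ℓ => (c.2:ℕ) = 0) s) :=
    (Multiset.filter_add_not _ _).symm
  have hff : Multiset.filter (fun c => (c.1:ℕ) = 0)
        (Multiset.filter (fun c : Fin m × Fin ℓ => (c.2:ℕ) = 0) s) =
      (Finset.univ.filter (fun c : Fin m × Fin ℓ => (c.1:ℕ) = 0 ∧ (c.2:ℕ) = 0)).val := by
    rw [Multiset.filter_filter]
    rfl
  have hmap00 : Multiset.map d (Multiset.filter (fun c => (c.1:ℕ) = 0)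
        (Multiset.filter (fun c : Fin m × Fin ℓ => (c.2:ℕ) = 0) s)) =
      Multiset.replicate 1 r₂ := by
    have hcongr : ∀ c ∈ Multiset.filter (fun c : Fin m × Fin ℓ => (c.1:ℕ) = 0)
        (Multiset.filter (fun c : Fin m × Fin ℓ => (c.2:ℕ) = 0) s), d c = r₂ := by
      intro c hc
      have h1 := (Multiset.mem_filter.1 hc).2
      have h2 := (Multiset.mem_filter.1 (Multiset.mem_filter.1 hc).1).2
      simp [hd, Dfun, h1, h2]
    rw [Multiset.map_congr rfl hcongr, Multiset.map_const']
    rw [hff, ← Finset.card_def, card_filter_00 m ℓ hm hℓ]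
  have hmapk : Multiset.map d (Multiset.filter (fun c => ¬ (c.1:ℕ) = 0)
        (Multiset.filter (fun c : Fin m × Fin ℓ => (c.2:ℕ) = 0) s)) =
      Multiset.replicate (m-1) kk := by
    have hcongr : ∀ c ∈ Multiset.filter (fun c : Fin m × Fin ℓ => ¬ (c.1:ℕ) = 0)
        (Multiset.filter (fun c : Fin m × Fin ℓ => (c.2:ℕ) = 0) s), d c = kk := by
      intro c hc
      have h1 := (Multiset.mem_filter.1 hc).2
      have h2 := (Multiset.mem_filter.1 (Multiset.mem_filter.1 hc).1).2
      simp [hd, Dfun, h1, h2]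
    rw [Multiset.map_congr rfl hcongr, Multiset.map_const']
    congr 1
    have := congrArg Multiset.card hsplit0
    rw [Multiset.card_add] at this
    have hcard0 : Multiset.card (Multiset.filter (fun c : Fin m × Fin ℓ => (c.2:ℕ) = 0) s) = m := by
      have heq : Multiset.filter (fun c : Fin m × Fin ℓ => (c.2:ℕ) = 0) s =
          (Finset.univ.filter (fun c : Fin m × Fin ℓ => (c.2:ℕ) = 0)).val := rfl
      rw [heq, ← Finset.card_def, card_filter_snd0 m ℓ hℓ]
    have hcard1 : Multiset.card (Multiset.filter (fun c : Fin m × Fin ℓ => (c.1:ℕ) = 0)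
        (Multiset.filter (fun c : Fin m × Fin ℓ => (c.2:ℕ) = 0) s)) = 1 := by
      rw [hff, ← Finset.card_def, card_filter_00 m ℓ hm hℓ]
    omega
  calc Dfun m ℓ r₁ r₂ kk none ::ₘ Multiset.map d s
      = r₁ ::ₘ Multiset.map d (Multiset.filter (fun c => (c.1:ℕ) = 0)
          (Multiset.filter (fun c : Fin m × Fin ℓ => (c.2:ℕ) = 0) s) +
        Multiset.filter (fun c => ¬ (c.1:ℕ) = 0)
          (Multiset.filter (fun c : Fin m × Fin ℓ => (c.2:ℕ) = 0) s) +
        Multiset.filter (fun c => ¬ (c.2:ℕ) = 0) s) := by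
        rw [hdnone]; congr 1; rw [← hsplit0, ← hs_split]
    _ = r₁ ::ₘ (Multiset.replicate 1 r₂ + Multiset.replicate (m-1) kk +
          Multiset.replicate (m*(ℓ-1)) (-1:ℝ)) := by
        rw [Multiset.map_add, Multiset.map_add, hmap00, hmapk, hmap2]
    _ = Multiset.replicate (m*(ℓ-1)) (-1:ℝ) + Multiset.replicate (m-1) kk + {r₁, r₂} := by
        rw [Multiset.insert_eq_cons, ← Multiset.singleton_add, ← Multiset.singleton_add,
          Multiset.replicate_one]
        abel

lemma charpoly_diag' {N : Type*} [Fintype N] [DecidableEq N] (d : N → ℝ) :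
    (Matrix.diagonal d).charpoly = ∏ i, (X - C (d i)) := by
  rw [Matrix.charpoly]
  have : charmatrix (diagonal d) = diagonal (fun i => X - C (d i)) := by
    ext i j; by_cases h : i = j <;> simp [h, charmatrix_apply_eq, charmatrix_apply_ne, diagonal]
  rw [this, det_diagonal]

lemma charpoly_similar' {N : Type*} [Fintype N] [DecidableEq N]
    (A P D : Matrix N N ℝ) (hP : IsUnit P.det) (h : A * P = P * D) :
    A.charpoly = D.charpoly := by
  have hmap : A.map C * P.map C = P.map C * D.map C := by
    rw [← Matrix.map_mul, ← Matrix.map_mul, h]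
  have hcomm : ∀ M : Matrix N N ℝ[X], scalar N (X : ℝ[X]) * M = M * scalar N X :=
    fun M => (Matrix.scalar_commute (X:ℝ[X]) (fun r => Commute.all _ _) M).eq
  have key : charmatrix A * P.map C = P.map C * charmatrix D := by
    rw [charmatrix, charmatrix, sub_mul, mul_sub, hcomm, RingHom.mapMatrix_apply,
      RingHom.mapMatrix_apply, hmap]
  have h2 : (P.map C).det ≠ 0 := by
    rw [← RingHom.mapMatrix_apply, ← RingHom.map_det]
    exact (Polynomial.isUnit_C.2 hP).ne_zero
  have := congrArg Matrix.det key
  rw [det_mul, det_mul, mul_comm] at this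
  rw [Matrix.charpoly, Matrix.charpoly]
  exact mul_left_cancel₀ h2 this

lemma efun_ne (m ℓ : ℕ) (hm : 1 ≤ m) (hℓ : 1 ≤ ℓ) (t₁ t₂ : ℝ) :
    ∀ c, efun m ℓ t₁ t₂ c ≠ 0 := by
  have hm' : (1:ℝ) ≤ (m:ℝ) := by exact_mod_cast hm
  have hℓ' : (1:ℝ) ≤ (ℓ:ℝ) := by exact_mod_cast hℓ
  have hml : (1:ℝ) ≤ (m:ℝ)*(ℓ:ℝ) := by nlinarith
  rintro (_ | ⟨j, i⟩)
  · simp only [efun]; nlinarith [sq_nonneg t₁]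
  · simp only [efun]
    by_cases hi : (i:ℕ) = 0
    · by_cases hj : (j:ℕ) = 0
      · simp only [hi, hj, if_true, ite_true]; nlinarith [sq_nonneg t₂]
      · simp only [hi, hj, if_true, if_false, ite_true, ite_false]
        have : (1:ℝ) ≤ ((j:ℕ):ℝ) := by exact_mod_cast Nat.one_le_iff_ne_zero.2 hj
        nlinarith
    · simp only [hi, if_false, ite_false]
      have : (1:ℝ) ≤ ((i:ℕ):ℝ) := by exact_mod_cast Nat.one_le_iff_ne_zero.2 hi
      nlinarith

lemma isUnit_det_P (m ℓ : ℕ) (hm : 1 ≤ m) (hℓ : 1 ≤ ℓ) (t₁ t₂ : ℝ)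
    (h3 : t₁*t₂ = -((m:ℝ)*(ℓ:ℝ))) : IsUnit (Pmat m ℓ t₁ t₂).det := by
  have h := congrArg Matrix.det (PtP m ℓ t₁ t₂ h3)
  rw [det_mul, det_transpose, det_diagonal] at h
  have hprod : ∏ c, efun m ℓ t₁ t₂ c ≠ 0 :=
    Finset.prod_ne_zero_iff.2 (fun c _ => efun_ne m ℓ hm hℓ t₁ t₂ c)
  refine isUnit_iff_ne_zero.2 (fun h0 => hprod ?_)
  rw [← h, h0, mul_zero]

lemma eig_multiset {N : Type*} [Fintype N] [DecidableEq N] (A : Matrix N N ℝ)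
    (hA : A.IsHermitian) :
    Multiset.map hA.eigenvalues Finset.univ.val = A.charpoly.roots := by
  set U : Matrix N N ℝ := (hA.eigenvectorUnitary : Matrix N N ℝ) with hU
  obtain ⟨hU1, hU2⟩ := Unitary.mem_iff.mp hA.eigenvectorUnitary.2
  have hco : (RCLike.ofReal ∘ hA.eigenvalues : N → ℝ) = hA.eigenvalues := by
    funext i; simp [RCLike.ofReal_real_eq_id]
  have hAU : A * U = U * diagonal hA.eigenvalues := by
    conv_lhs => rw [hA.spectral_theorem]
    rw [Unitary.conjStarAlgAut_apply, mul_assoc, ← hU, hU1, mul_one, hco]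
  have hUdet : IsUnit U.det := by
    apply IsUnit.of_mul_eq_one (star U).det
    rw [← det_mul, hU2]
    exact det_one
  rw [charpoly_similar' A U (diagonal hA.eigenvalues) hUdet hAU, charpoly_diag',
    Finset.prod_eq_multiset_prod]
  rw [show (Finset.univ.val.map (fun i => X - C (hA.eigenvalues i))) =
    (Finset.univ.val.map hA.eigenvalues).map (fun a => X - C a) from
      (Multiset.map_map (fun a => X - C a) hA.eigenvalues Finset.univ.val).symm]
  rw [Polynomial.roots_multiset_prod_X_sub_C]


/-- the adjacency spectrum of the hyperstar `(S_n)^k` consists of `-1` with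
multiplicity `(n-1)(k-2)`, `k-2` with multiplicity `n-2`, and the two roots of
`x² - (k-2)x - (n-1)(k-1) = 0`. -/
theorem stmt_1 (n k : ℕ) (hn : 2 ≤ n) (hk : 2 ≤ k) :
    ∃ r₁ r₂ : ℝ,
      r₁ ^ 2 - ((k : ℝ) - 2) * r₁ - ((n : ℝ) - 1) * ((k : ℝ) - 1) = 0 ∧
      r₂ ^ 2 - ((k : ℝ) - 2) * r₂ - ((n : ℝ) - 1) * ((k : ℝ) - 1) = 0 ∧
      r₁ ≠ r₂ ∧
      Multiset.map (adjacency_isHermitian (hyperstar n k)).eigenvalues Finset.univ.val =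
        Multiset.replicate ((n - 1) * (k - 2)) (-1 : ℝ) +
        Multiset.replicate (n - 2) ((k : ℝ) - 2) + {r₁, r₂} := by

  have hm : 1 ≤ n - 1 := by omega
  have hℓ : 1 ≤ k - 1 := by omega
  have hM : ((n-1:ℕ):ℝ) = (n:ℝ) - 1 := by
    rw [Nat.cast_sub (by omega)]; simp
  have hL : ((k-1:ℕ):ℝ) = (k:ℝ) - 1 := by
    rw [Nat.cast_sub (by omega)]; simp
  have hM1 : (1:ℝ) ≤ ((n-1:ℕ):ℝ) := by exact_mod_cast hm
  have hL1 : (1:ℝ) ≤ ((k-1:ℕ):ℝ) := by exact_mod_cast hℓ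
  set kk : ℝ := (k:ℝ) - 2 with hkkdef
  set S : ℝ := Real.sqrt (kk^2 + 4*((n-1:ℕ):ℝ)*((k-1:ℕ):ℝ)) with hSdef
  have hS2 : S^2 = kk^2 + 4*((n-1:ℕ):ℝ)*((k-1:ℕ):ℝ) := Real.sq_sqrt (by positivity)
  have hSpos : 0 < S := Real.sqrt_pos.2 (by nlinarith)
  refine ⟨(kk+S)/2, (kk-S)/2, ?_, ?_, ?_, ?_⟩
  · rw [← hM, ← hL]; linear_combination hS2/4
  · rw [← hM, ← hL]; linear_combination hS2/4
  · intro h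
    have : S = 0 := by linarith
    exact hSpos.ne' this
  · have heq := eig_multiset (adjacencyMatrix (hyperstar n k)) (adjacency_isHermitian _)
    rw [heq]
    have hchar : (adjacencyMatrix (hyperstar n k)).charpoly =
        ∏ c, (X - C (Dfun (n-1) (k-1) ((kk+S)/2) ((kk-S)/2) kk c)) := by
      rw [show (adjacencyMatrix (hyperstar n k)).charpoly = (Amat (n-1) (k-1)).charpoly from
        congrArg Matrix.charpoly (adjacency_eq_Amat n k)]
      refine (charpoly_similar' _ (Pmat (n-1) (k-1) ((S-kk)/2) ((-S-kk)/2)) _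
        (isUnit_det_P (n-1) (k-1) hm hℓ _ _ (by linear_combination (-hS2)/4))
        (AP_eq_PD (n-1) (k-1) ((S-kk)/2) ((-S-kk)/2) ((kk+S)/2) ((kk-S)/2) kk
          (by rw [hL]; ring) (by ring) (by ring)
          (by linear_combination hS2/4) (by linear_combination hS2/4))).trans
        (charpoly_diag' _)
    rw [hchar, Finset.prod_eq_multiset_prod]
    rw [show (Finset.univ.val.map (fun c => X - C (Dfun (n-1) (k-1) ((kk+S)/2) ((kk-S)/2) kk c))) =
      (Finset.univ.val.map (Dfun (n-1) (k-1) ((kk+S)/2) ((kk-S)/2) kk)).map (fun a => X - C a) from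
        (Multiset.map_map (fun a => X - C a) _ Finset.univ.val).symm]
    rw [Polynomial.roots_multiset_prod_X_sub_C]
    rw [map_Dfun (n-1) (k-1) hm hℓ]
    have e1 : (k-1) - 1 = k - 2 := by omega
    have e2 : (n-1) - 1 = n - 2 := by omega
    rw [e1, e2]
end

section
/- The adjacency energy of the k-uniform hyperstar (S_n)^k equals (k-2)(2n-3) + √((k-2)² + 4(n-1)(k-1)). -/
open Matrix BigOperators

set_option linter.unusedSectionVars false
set_option maxHeartbeats 1000000

variable {V : Type*} [Fintype V] [DecidableEq V]

section Aux
def hsMat (m p : ℕ) : Matrix (Option (Fin m × Fin p)) (Option (Fin m × Fin p)) ℝ :=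
  Matrix.of fun x y => match x, y with
  | none, none => 0
  | none, some _ => 1
  | some _, none => 1
  | some a, some b => if a = b then 0 else if a.1 = b.1 then 1 else 0

lemma mem_edge {m p : ℕ} (j : Fin m) (b : Fin m × Fin p) :
    some b ∈ insert none ((Finset.univ : Finset (Fin p)).image (fun i => some (j, i))) ↔ b.1 = j := by
  simp only [Finset.mem_insert, reduceCtorEq, false_or, Finset.mem_image, Finset.mem_univ,
    true_and, Option.some.injEq]
  constructor
  · rintro ⟨i, hi⟩; rw [← hi]
  · intro h; exact ⟨b.2, by rw [← h]⟩

lemma adj_eq_hsMat (n k : ℕ) : adjacencyMatrix (hyperstar n k) = hsMat (n-1) (k-1) := by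
  have key : ∀ x y : Option (Fin (n-1) × Fin (k-1)),
      ((hyperstar n k).filter (fun e => x ∈ e ∧ y ∈ e)).card
        = (Finset.univ.filter (fun j : Fin (n-1) =>
            x ∈ insert none ((Finset.univ : Finset (Fin (k-1))).image (fun i => some (j, i))) ∧
            y ∈ insert none ((Finset.univ : Finset (Fin (k-1))).image (fun i => some (j, i))))).card := by
    intro x y
    rw [hyperstar, Multiset.filter_map, Multiset.card_map]
    rfl
  ext x y
  match x, y with
  | none, none => simp [adjacencyMatrix, hsMat]
  | none, some b =>
    simp only [adjacencyMatrix, Matrix.of_apply, hsMat, key, reduceCtorEq, if_false]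
    rw [show (Finset.univ.filter (fun j : Fin (n-1) =>
        (none : Option (Fin (n-1) × Fin (k-1))) ∈ insert none ((Finset.univ : Finset (Fin (k-1))).image (fun i => some (j, i))) ∧
        some b ∈ insert none ((Finset.univ : Finset (Fin (k-1))).image (fun i => some (j, i))))) = {b.1} from by
      ext j
      simp only [Finset.mem_filter, Finset.mem_univ, true_and, Finset.mem_singleton, mem_edge]
      constructor
      · rintro ⟨-, h⟩; exact h.symm
      · rintro rfl; exact ⟨Finset.mem_insert_self _ _, rfl⟩]
    simp
  | some a, none =>
    simp only [adjacencyMatrix, Matrix.of_apply, hsMat, key, reduceCtorEq, if_false]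
    rw [show (Finset.univ.filter (fun j : Fin (n-1) =>
        some a ∈ insert none ((Finset.univ : Finset (Fin (k-1))).image (fun i => some (j, i))) ∧
        (none : Option (Fin (n-1) × Fin (k-1))) ∈ insert none ((Finset.univ : Finset (Fin (k-1))).image (fun i => some (j, i))))) = {a.1} from by
      ext j
      simp only [Finset.mem_filter, Finset.mem_univ, true_and, Finset.mem_singleton, mem_edge]
      constructor
      · rintro ⟨h, -⟩; exact h.symm
      · rintro rfl; exact ⟨rfl, Finset.mem_insert_self _ _⟩]
    simp
  | some a, some b =>
    simp only [adjacencyMatrix, Matrix.of_apply, hsMat, key, Option.some.injEq]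
    by_cases hab : a = b
    · simp [hab]
    · simp only [hab, if_false]
      by_cases h1 : a.1 = b.1
      · rw [show (Finset.univ.filter (fun j : Fin (n-1) =>
            some a ∈ insert none ((Finset.univ : Finset (Fin (k-1))).image (fun i => some (j, i))) ∧
            some b ∈ insert none ((Finset.univ : Finset (Fin (k-1))).image (fun i => some (j, i))))) = {a.1} from by
          ext j
          simp only [Finset.mem_filter, Finset.mem_univ, true_and, Finset.mem_singleton, mem_edge]
          constructor
          · rintro ⟨h, -⟩; exact h.symm
          · rintro rfl; exact ⟨rfl, h1.symm⟩]
        simp [h1]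
      · rw [show (Finset.univ.filter (fun j : Fin (n-1) =>
            some a ∈ insert none ((Finset.univ : Finset (Fin (k-1))).image (fun i => some (j, i))) ∧
            some b ∈ insert none ((Finset.univ : Finset (Fin (k-1))).image (fun i => some (j, i))))) = ∅ from by
          ext j
          simp only [Finset.mem_filter, Finset.mem_univ, true_and, Finset.notMem_empty,
            iff_false, mem_edge, not_and]
          intro h1' h2'
          exact h1 (h1'.trans h2'.symm)]
        simp [h1]

-- spectral moments
lemma sum_eigenvalues_pow {N : Type*} [Fintype N] [DecidableEq N] (A : Matrix N N ℝ)
    (hA : A.IsHermitian) (t : ℕ) : ∑ i, hA.eigenvalues i ^ t = (A ^ t).trace := by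
  set U : Matrix N N ℝ := (hA.eigenvectorUnitary : Matrix N N ℝ) with hUdef
  have h2 : U * star U = 1 := (Matrix.mem_unitaryGroup_iff).mp hA.eigenvectorUnitary.2
  have h1 : star U * U = 1 := (Matrix.mem_unitaryGroup_iff').mp hA.eigenvectorUnitary.2
  have hspec : A = U * Matrix.diagonal (fun i => hA.eigenvalues i) * star U := by
    have := hA.spectral_theorem
    simpa [Function.comp] using this
  have key : ∀ s : ℕ, A ^ s = U * (Matrix.diagonal (fun i => hA.eigenvalues i)) ^ s * star U := by
    intro s
    induction s with
    | zero => simp [h2]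
    | succ s ih =>
      rw [pow_succ, ih, pow_succ]
      calc U * Matrix.diagonal (fun i => hA.eigenvalues i) ^ s * star U * A
          = U * Matrix.diagonal (fun i => hA.eigenvalues i) ^ s * star U *
              (U * Matrix.diagonal (fun i => hA.eigenvalues i) * star U) := by rw [← hspec]
        _ = U * Matrix.diagonal (fun i => hA.eigenvalues i) ^ s * (star U * U) *
              Matrix.diagonal (fun i => hA.eigenvalues i) * star U := by
              simp only [Matrix.mul_assoc]
        _ = U * (Matrix.diagonal (fun i => hA.eigenvalues i) ^ s *
              Matrix.diagonal (fun i => hA.eigenvalues i)) * star U := by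
              rw [h1]; simp only [Matrix.mul_one, Matrix.mul_assoc]
  rw [key t, Matrix.trace_mul_cycle, h1, Matrix.one_mul,
    Matrix.diagonal_pow, Matrix.trace_diagonal]
  simp [Pi.pow_apply]


lemma hsMat_eig (m p : ℕ) (lam : ℝ) (v : Option (Fin m × Fin p) → ℝ)
    (hv : v ≠ 0) (h : hsMat m p *ᵥ v = lam • v) :
    (lam + 1) * (lam - ((p:ℝ)-1)) * (lam^2 - ((p:ℝ)-1)*lam - (m:ℝ)*(p:ℝ)) = 0 := by
  set S : Fin m → ℝ := fun j => ∑ i, v (some (j, i)) with hS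
  -- center equation
  have hc : ∑ j, S j = lam * v none := by
    have := congrFun h none
    simp only [Matrix.mulVec, dotProduct, Pi.smul_apply, smul_eq_mul] at this
    rw [Fintype.sum_option] at this
    simp only [hsMat, Matrix.of_apply, zero_mul, one_mul, zero_add] at this
    rw [← this, hS, Fintype.sum_prod_type]
  -- leaf equations
  have hleaf : ∀ a : Fin m × Fin p, v none + (S a.1 - v (some a)) = lam * v (some a) := by
    intro a
    have := congrFun h (some a)
    simp only [Matrix.mulVec, dotProduct, Pi.smul_apply, smul_eq_mul] at this
    rw [Fintype.sum_option] at this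
    simp only [hsMat, Matrix.of_apply, one_mul] at this
    have hsum : ∑ b : Fin m × Fin p,
        (if a = b then (0:ℝ) else if a.1 = b.1 then 1 else 0) * v (some b)
        = S a.1 - v (some a) := by
      have hptw : ∀ b : Fin m × Fin p,
          (if a = b then (0:ℝ) else if a.1 = b.1 then 1 else 0) * v (some b)
          = (if a.1 = b.1 then v (some b) else 0) - (if a = b then v (some b) else 0) := by
        intro b
        by_cases hab : a = b
        · subst hab; simp
        · simp [hab]
      rw [Finset.sum_congr rfl (fun b _ => hptw b), Finset.sum_sub_distrib]
      congr 1
      · rw [Fintype.sum_prod_type]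
        rw [Finset.sum_congr rfl (fun j (_ : j ∈ Finset.univ) => by
          rcases eq_or_ne a.1 j with hj | hj
          · simp only [hj, if_true]; rfl
          · simp only [hj, if_false, Finset.sum_const_zero] : ∀ j ∈ Finset.univ, (∑ i, if a.1 = j then v (some (j, i)) else 0) = if a.1 = j then S j else 0)]
        simp
      · simp
    rw [hsum] at this
    exact this
  -- block-sum equations
  have hblock : ∀ j, (p:ℝ) * v none + ((p:ℝ) - 1) * S j = lam * S j := by
    intro j
    have := Finset.sum_congr rfl (fun i (_ : i ∈ Finset.univ) => hleaf (j, i))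
    simp only [Finset.sum_add_distrib, Finset.sum_sub_distrib, Finset.sum_const,
      Finset.card_univ, Fintype.card_fin, nsmul_eq_mul, ← Finset.mul_sum] at this
    have hSj : ∑ i, v (some (j, i)) = S j := rfl
    rw [hSj] at this
    linarith [this]
  -- center quadratic
  have hvc : (lam^2 - ((p:ℝ)-1)*lam - (m:ℝ)*(p:ℝ)) * v none = 0 := by
    have := Finset.sum_congr rfl (fun j (_ : j ∈ Finset.univ) => hblock j)
    simp only [Finset.sum_add_distrib, Finset.sum_const, Finset.card_univ, Fintype.card_fin,
      nsmul_eq_mul, ← Finset.mul_sum] at this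
    rw [hc] at this
    ring_nf
    ring_nf at this
    linarith [this]
  by_contra H
  have h1 : lam + 1 ≠ 0 := fun h' => H (by rw [h']; ring)
  have h2 : lam - ((p:ℝ)-1) ≠ 0 := fun h' => H (by rw [h']; ring)
  have h3 : lam^2 - ((p:ℝ)-1)*lam - (m:ℝ)*(p:ℝ) ≠ 0 := fun h' => H (by rw [h']; ring)
  have hv0 : v none = 0 := by
    rcases mul_eq_zero.mp hvc with h' | h'
    · exact absurd h' h3
    · exact h'
  have hS0 : ∀ j, S j = 0 := by
    intro j
    have := hblock j
    rw [hv0, mul_zero, zero_add] at this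
    have : (lam - ((p:ℝ)-1)) * S j = 0 := by linarith
    rcases mul_eq_zero.mp this with h' | h'
    · exact absurd h' h2
    · exact h'
  have hva : ∀ a : Fin m × Fin p, v (some a) = 0 := by
    intro a
    have := hleaf a
    rw [hv0, hS0 a.1, zero_add, zero_sub] at this
    have : (lam + 1) * v (some a) = 0 := by linarith
    rcases mul_eq_zero.mp this with h' | h'
    · exact absurd h' h1
    · exact h'
  apply hv
  funext x
  cases x with
  | none => exact hv0
  | some a => exact hva a


def hsMat2 (m p : ℕ) : Matrix (Option (Fin m × Fin p)) (Option (Fin m × Fin p)) ℝ :=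
  Matrix.of fun x y => match x, y with
  | none, none => (m:ℝ)*(p:ℝ)
  | none, some _ => (p:ℝ)-1
  | some _, none => (p:ℝ)-1
  | some a, some b => if a = b then (p:ℝ) else if a.1 = b.1 then (p:ℝ)-1 else 1

-- helper indicator sums
lemma sum_ind_blk {m p : ℕ} (a : Fin m × Fin p) :
    ∑ b : Fin m × Fin p, (if a.1 = b.1 then (1:ℝ) else 0) = (p:ℝ) := by
  rw [Fintype.sum_prod_type]
  rw [Finset.sum_congr rfl (fun j (_ : j ∈ Finset.univ) => by
    rcases eq_or_ne a.1 j with hj | hj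
    · simp [hj]
    · simp [hj] : ∀ j ∈ Finset.univ, (∑ i : Fin p, if a.1 = j then (1:ℝ) else 0) = if a.1 = j then (p:ℝ) else 0)]
  simp

lemma sum_ind_eq {m p : ℕ} (a : Fin m × Fin p) :
    ∑ b : Fin m × Fin p, (if a = b then (1:ℝ) else 0) = 1 := by
  simp

lemma hsMat_symm (m p : ℕ) (x y : Option (Fin m × Fin p)) : hsMat m p x y = hsMat m p y x := by
  match x, y with
  | none, none => rfl
  | none, some b => rfl
  | some a, none => rfl
  | some a, some b =>
    simp only [hsMat, Matrix.of_apply]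
    rcases eq_or_ne a b with hab | hab
    · simp [hab]
    · rcases eq_or_ne a.1 b.1 with h1 | h1
      · rw [if_neg hab, if_neg (Ne.symm hab), if_pos h1, if_pos h1.symm]
      · rw [if_neg hab, if_neg (Ne.symm hab), if_neg h1, if_neg (Ne.symm h1)]

lemma hsMat_sq (m p : ℕ) : hsMat m p * hsMat m p = hsMat2 m p := by
  ext x y
  rw [Matrix.mul_apply, Fintype.sum_option]
  match x, y with
  | none, none =>
    simp only [hsMat, hsMat2, Matrix.of_apply, mul_zero, one_mul, zero_add, mul_one]
    rw [Finset.sum_const]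
    simp [mul_comm]
  | none, some b =>
    simp only [hsMat, hsMat2, Matrix.of_apply, zero_mul, one_mul, zero_add]
    have : ∀ c : Fin m × Fin p, (if c = b then (0:ℝ) else if c.1 = b.1 then 1 else 0)
        = (if b.1 = c.1 then (1:ℝ) else 0) - (if b = c then 1 else 0) := by
      intro c
      rcases eq_or_ne c b with h1 | h1
      · simp [h1]
      · rcases eq_or_ne c.1 b.1 with h2 | h2
        · rw [if_neg h1, if_pos h2, if_pos h2.symm, if_neg (Ne.symm h1)]; ring
        · rw [if_neg h1, if_neg h2, if_neg (Ne.symm h2), if_neg (Ne.symm h1)]; ring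
    rw [Finset.sum_congr rfl (fun c _ => this c), Finset.sum_sub_distrib, sum_ind_blk b, sum_ind_eq b]
  | some a, none =>
    simp only [hsMat, hsMat2, Matrix.of_apply, zero_mul, mul_one, add_zero, mul_zero]
    have : ∀ c : Fin m × Fin p, (if a = c then (0:ℝ) else if a.1 = c.1 then 1 else 0)
        = (if a.1 = c.1 then (1:ℝ) else 0) - (if a = c then 1 else 0) := by
      intro c
      rcases eq_or_ne a c with h1 | h1
      · simp [h1]
      · simp [h1]
    rw [Finset.sum_congr rfl (fun c _ => this c), Finset.sum_sub_distrib, sum_ind_blk a, sum_ind_eq a]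
    ring
  | some a, some b =>
    simp only [hsMat, hsMat2, Matrix.of_apply, one_mul]
    have : ∀ c : Fin m × Fin p,
        (if a = c then (0:ℝ) else if a.1 = c.1 then 1 else 0) *
          (if c = b then (0:ℝ) else if c.1 = b.1 then 1 else 0)
        = (if a.1 = c.1 ∧ c.1 = b.1 then (1:ℝ) else 0)
          - (if a = c ∧ c.1 = b.1 then 1 else 0) - (if a.1 = c.1 ∧ c = b then 1 else 0)
          + (if a = c ∧ c = b then 1 else 0) := by
      intro c
      rcases eq_or_ne a c with h1 | h1 <;> rcases eq_or_ne c b with h2 | h2 <;>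
        rcases eq_or_ne a.1 c.1 with h3 | h3 <;> rcases eq_or_ne c.1 b.1 with h4 | h4 <;>
        simp_all
    rw [Finset.sum_congr rfl (fun c _ => this c)]
    rw [Finset.sum_add_distrib, Finset.sum_sub_distrib, Finset.sum_sub_distrib]
    have e1 : ∑ c : Fin m × Fin p, (if a.1 = c.1 ∧ c.1 = b.1 then (1:ℝ) else 0)
        = if a.1 = b.1 then (p:ℝ) else 0 := by
      rcases eq_or_ne a.1 b.1 with h | h
      · rw [if_pos h, ← sum_ind_blk (m := m) a]
        apply Finset.sum_congr rfl
        intro c _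
        rcases eq_or_ne a.1 c.1 with h2 | h2
        · simp [h2, h2.symm.trans h]
        · simp [h2]
      · rw [if_neg h]
        apply Finset.sum_eq_zero
        intro c _
        have : ¬ (a.1 = c.1 ∧ c.1 = b.1) := fun ⟨u, w⟩ => h (u.trans w)
        simp [this]
    have e2 : ∑ c : Fin m × Fin p, (if a = c ∧ c.1 = b.1 then (1:ℝ) else 0)
        = if a.1 = b.1 then (1:ℝ) else 0 := by
      rw [Finset.sum_eq_single a]
      · simp
      · intro c _ hc; simp [Ne.symm hc]
      · simp
    have e3 : ∑ c : Fin m × Fin p, (if a.1 = c.1 ∧ c = b then (1:ℝ) else 0)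
        = if a.1 = b.1 then (1:ℝ) else 0 := by
      rw [Finset.sum_eq_single b]
      · simp
      · intro c _ hc; simp [hc]
      · simp
    have e4 : ∑ c : Fin m × Fin p, (if a = c ∧ c = b then (1:ℝ) else 0)
        = if a = b then (1:ℝ) else 0 := by
      rw [Finset.sum_eq_single a]
      · simp
      · intro c _ hc; simp [Ne.symm hc]
      · simp
    rw [e1, e2, e3, e4]
    rcases eq_or_ne a b with hab | hab
    · have : a.1 = b.1 := by rw [hab]
      simp only [hab, this, if_true]
      ring
    · rcases eq_or_ne a.1 b.1 with h1 | h1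
      · simp only [hab, h1, if_true, if_false]
        ring
      · simp only [hab, h1, if_true, if_false]
        ring

lemma hsMat_trace (m p : ℕ) : (hsMat m p).trace = 0 := by
  unfold Matrix.trace
  apply Finset.sum_eq_zero
  intro x _
  match x with
  | none => rfl
  | some a => simp [Matrix.diag, hsMat]

lemma hsMat_trace_sq (m p : ℕ) : (hsMat m p ^ 2).trace = (m:ℝ)*(p:ℝ)*((p:ℝ)+1) := by
  rw [pow_two, hsMat_sq]
  unfold Matrix.trace
  rw [Fintype.sum_option]
  have h1 : ∀ a : Fin m × Fin p, (hsMat2 m p).diag (some a) = (p:ℝ) := by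
    intro a; simp [Matrix.diag, hsMat2]
  rw [Finset.sum_congr rfl (fun a _ => h1 a), Finset.sum_const]
  simp [Matrix.diag, hsMat2]
  ring

lemma hsMat_trace_cube (m p : ℕ) :
    (hsMat m p ^ 3).trace = (m:ℝ)*(p:ℝ)*((p:ℝ)-1)*((p:ℝ)+1) := by
  have h3 : hsMat m p ^ 3 = hsMat2 m p * hsMat m p := by
    rw [pow_succ, pow_two, hsMat_sq]
  rw [h3]
  unfold Matrix.trace
  rw [Fintype.sum_option]
  -- diagonal entries of hsMat2 * hsMat
  have hnone : (hsMat2 m p * hsMat m p).diag none = (m:ℝ)*(p:ℝ)*((p:ℝ)-1) := by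
    show ∑ y, hsMat2 m p none y * hsMat m p y none = _
    rw [Fintype.sum_option]
    simp only [hsMat, hsMat2, Matrix.of_apply, mul_one, mul_zero, zero_add]
    rw [Finset.sum_const]
    simp
  have hsome : ∀ a : Fin m × Fin p,
      (hsMat2 m p * hsMat m p).diag (some a) = ((p:ℝ)-1) + ((p:ℝ)-1)*((p:ℝ)-1) := by
    intro a
    show ∑ y, hsMat2 m p (some a) y * hsMat m p y (some a) = _
    rw [Fintype.sum_option]
    simp only [hsMat, hsMat2, Matrix.of_apply, mul_one]
    have key : ∀ b : Fin m × Fin p,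
        (if a = b then (p:ℝ) else if a.1 = b.1 then (p:ℝ)-1 else 1) *
          (if b = a then (0:ℝ) else if b.1 = a.1 then 1 else 0)
        = ((p:ℝ)-1) * ((if a.1 = b.1 then (1:ℝ) else 0) - (if a = b then 1 else 0)) := by
      intro b
      rcases eq_or_ne a b with h1 | h1
      · subst h1; simp
      · rcases eq_or_ne a.1 b.1 with h2 | h2
        · simp only [if_neg h1, if_neg (Ne.symm h1), if_pos h2, if_pos h2.symm, if_false]; ring
        · simp only [if_neg h1, if_neg (Ne.symm h1), if_neg h2, if_neg (Ne.symm h2)]; ring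
    rw [Finset.sum_congr rfl (fun b _ => key b), ← Finset.mul_sum, Finset.sum_sub_distrib,
      sum_ind_blk a, sum_ind_eq a]
  rw [hnone, Finset.sum_congr rfl (fun a _ => hsome a), Finset.sum_const]
  simp
  ring

lemma energy_abstract {I : Type*} [Fintype I] [DecidableEq I] (f : I → ℝ) (M P s : ℝ)
    (hM : 1 ≤ M) (hP : 1 ≤ P) (hs : s^2 = (P-1)^2 + 4*M*P) (hs0 : 0 < s)
    (hroot : ∀ i, (f i + 1) * (f i - (P-1)) * ((f i)^2 - (P-1)*(f i) - M*P) = 0)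
    (hN : ((Fintype.card I : ℝ)) = 1 + M*P)
    (h1 : ∑ i, f i = 0) (h2 : ∑ i, (f i)^2 = M*P*(P+1))
    (h3 : ∑ i, (f i)^3 = M*P*(P-1)*(P+1)) :
    ∑ i, |f i| = (P-1)*(2*M-1) + s := by
  have hM0 : 0 < M := lt_of_lt_of_le zero_lt_one hM
  have hP0 : 0 < P := lt_of_lt_of_le zero_lt_one hP
  have hsP : P - 1 < s := by nlinarith [mul_pos hM0 hP0]
  -- the four eigenvalue classes
  set T1 := Finset.univ.filter (fun i => f i = -1) with hT1
  set T2 := Finset.univ.filter (fun i => f i = P-1) with hT2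
  set T3 := Finset.univ.filter (fun i => f i = (P-1+s)/2) with hT3
  set T4 := Finset.univ.filter (fun i => f i = (P-1-s)/2 ∧ f i ≠ -1) with hT4
  have hcases : ∀ i, f i = -1 ∨ f i = P-1 ∨ f i = (P-1+s)/2 ∨ f i = (P-1-s)/2 := by
    intro i
    rcases mul_eq_zero.mp (hroot i) with h | h
    · rcases mul_eq_zero.mp h with h' | h'
      · exact Or.inl (by linarith)
      · exact Or.inr (Or.inl (by linarith))
    · have h4 : (f i - (P-1+s)/2) * (f i - (P-1-s)/2) = 0 := by
        linear_combination h - (1/4)*hs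
      rcases mul_eq_zero.mp h4 with h' | h'
      · exact Or.inr (Or.inr (Or.inl (by linarith)))
      · exact Or.inr (Or.inr (Or.inr (by linarith)))
  -- disjointness
  have hd12 : Disjoint T1 T2 := by
    rw [Finset.disjoint_left]
    intro i hi1 hi2
    rw [hT1, Finset.mem_filter] at hi1
    rw [hT2, Finset.mem_filter] at hi2
    linarith [hi1.2, hi2.2]
  have hd123 : Disjoint (T1 ∪ T2) T3 := by
    rw [Finset.disjoint_left]
    intro i hi1 hi3
    rw [hT3, Finset.mem_filter] at hi3
    rcases Finset.mem_union.mp hi1 with hi | hi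
    · rw [hT1, Finset.mem_filter] at hi; linarith [hi.2, hi3.2]
    · rw [hT2, Finset.mem_filter] at hi; linarith [hi.2, hi3.2]
  have hd1234 : Disjoint ((T1 ∪ T2) ∪ T3) T4 := by
    rw [Finset.disjoint_left]
    intro i hi1 hi4
    rw [hT4, Finset.mem_filter] at hi4
    rcases Finset.mem_union.mp hi1 with hi | hi
    · rcases Finset.mem_union.mp hi with hi' | hi'
      · rw [hT1, Finset.mem_filter] at hi'; exact hi4.2.2 hi'.2
      · rw [hT2, Finset.mem_filter] at hi'; linarith [hi'.2, hi4.2.1]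
    · rw [hT3, Finset.mem_filter] at hi; linarith [hi.2, hi4.2.1]
  have hcover : ((T1 ∪ T2) ∪ T3) ∪ T4 = Finset.univ := by
    apply Finset.eq_univ_of_forall
    intro i
    simp only [Finset.mem_union, hT1, hT2, hT3, hT4, Finset.mem_filter, Finset.mem_univ, true_and]
    rcases hcases i with h | h | h | h
    · exact Or.inl (Or.inl (Or.inl h))
    · exact Or.inl (Or.inl (Or.inr h))
    · exact Or.inl (Or.inr h)
    · by_cases h' : f i = -1
      · exact Or.inl (Or.inl (Or.inl h'))
      · exact Or.inr ⟨h, h'⟩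
  have hsplit : ∀ g : I → ℝ, ∑ i, g i
      = (∑ i ∈ T1, g i) + (∑ i ∈ T2, g i) + (∑ i ∈ T3, g i) + (∑ i ∈ T4, g i) := by
    intro g
    rw [← hcover, Finset.sum_union hd1234, Finset.sum_union hd123, Finset.sum_union hd12]
  have hmem1 : ∀ i ∈ T1, f i = -1 := fun i hi => (Finset.mem_filter.mp hi).2
  have hmem2 : ∀ i ∈ T2, f i = P-1 := fun i hi => (Finset.mem_filter.mp hi).2
  have hmem3 : ∀ i ∈ T3, f i = (P-1+s)/2 := fun i hi => (Finset.mem_filter.mp hi).2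
  have hmem4 : ∀ i ∈ T4, f i = (P-1-s)/2 := fun i hi => (Finset.mem_filter.mp hi).2.1
  set a := (T1.card : ℝ)
  set b := (T2.card : ℝ)
  set c := (T3.card : ℝ)
  set d := (T4.card : ℝ)
  have cs : ∀ (T : Finset I) (r : ℝ), (∀ i ∈ T, f i = r) →
      (∀ g : ℝ → ℝ, ∑ i ∈ T, g (f i) = (T.card : ℝ) * g r) := by
    intro T r hT g
    rw [Finset.sum_congr rfl (fun i hi => by rw [hT i hi])]
    rw [Finset.sum_const, nsmul_eq_mul]
  -- moment equations
  have E0 : a + b + c + d = 1 + M*P := by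
    have := hsplit (fun _ => (1:ℝ))
    simp only [Finset.sum_const, nsmul_eq_mul, mul_one] at this
    rw [Finset.card_univ] at this
    rw [← hN, this]
  have E1 : a * (-1) + b * (P-1) + c * ((P-1+s)/2) + d * ((P-1-s)/2) = 0 := by
    rw [← h1, hsplit f]
    rw [show (∑ i ∈ T1, f i) = a * (-1) from cs T1 (-1) hmem1 (fun x => x),
        show (∑ i ∈ T2, f i) = b * (P-1) from cs T2 _ hmem2 (fun x => x),
        show (∑ i ∈ T3, f i) = c * ((P-1+s)/2) from cs T3 _ hmem3 (fun x => x),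
        show (∑ i ∈ T4, f i) = d * ((P-1-s)/2) from cs T4 _ hmem4 (fun x => x)]
  have E2 : a * (-1)^2 + b * (P-1)^2 + c * ((P-1+s)/2)^2 + d * ((P-1-s)/2)^2 = M*P*(P+1) := by
    rw [← h2, hsplit (fun i => (f i)^2)]
    rw [show (∑ i ∈ T1, (f i)^2) = a * (-1)^2 from cs T1 (-1) hmem1 (fun x => x^2),
        show (∑ i ∈ T2, (f i)^2) = b * (P-1)^2 from cs T2 _ hmem2 (fun x => x^2),
        show (∑ i ∈ T3, (f i)^2) = c * ((P-1+s)/2)^2 from cs T3 _ hmem3 (fun x => x^2),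
        show (∑ i ∈ T4, (f i)^2) = d * ((P-1-s)/2)^2 from cs T4 _ hmem4 (fun x => x^2)]
  have E3 : a * (-1)^3 + b * (P-1)^3 + c * ((P-1+s)/2)^3 + d * ((P-1-s)/2)^3
      = M*P*(P-1)*(P+1) := by
    rw [← h3, hsplit (fun i => (f i)^3)]
    rw [show (∑ i ∈ T1, (f i)^3) = a * (-1)^3 from cs T1 (-1) hmem1 (fun x => x^3),
        show (∑ i ∈ T2, (f i)^3) = b * (P-1)^3 from cs T2 _ hmem2 (fun x => x^3),
        show (∑ i ∈ T3, (f i)^3) = c * ((P-1+s)/2)^3 from cs T3 _ hmem3 (fun x => x^3),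
        show (∑ i ∈ T4, (f i)^3) = d * ((P-1-s)/2)^3 from cs T4 _ hmem4 (fun x => x^3)]
  -- energy in terms of a b c d
  have Eabs : ∑ i, |f i| = a * 1 + b * (P-1) + c * ((P-1+s)/2) + d * (-((P-1-s)/2)) := by
    rw [hsplit (fun i => |f i|)]
    rw [show (∑ i ∈ T1, |f i|) = a * 1 from by
        rw [cs T1 (-1) hmem1 (fun x => |x|)]; simp; rfl,
      show (∑ i ∈ T2, |f i|) = b * (P-1) from by
        rw [cs T2 _ hmem2 (fun x => |x|)]; rw [abs_of_nonneg (by linarith)],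
      show (∑ i ∈ T3, |f i|) = c * ((P-1+s)/2) from by
        rw [cs T3 _ hmem3 (fun x => |x|)]; rw [abs_of_nonneg (by linarith)],
      show (∑ i ∈ T4, |f i|) = d * (-((P-1-s)/2)) from by
        rw [cs T4 _ hmem4 (fun x => |x|)]; rw [abs_of_neg (by linarith)]]
  rw [Eabs]
  -- now pure algebra
  rcases eq_or_lt_of_le hM with hM1 | hM1
  · -- M = 1 : here s = P + 1, and T4 is empty
    have hsval : s = P + 1 := by nlinarith [hs0]
    have hd0 : d = 0 := by
      have : T4 = ∅ := by
        apply Finset.eq_empty_of_forall_notMem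
        intro i hi
        rw [hT4, Finset.mem_filter] at hi
        apply hi.2.2
        rw [hi.2.1, hsval]; ring
      simp [d, this]
    have hM' : M = 1 := hM1.symm
    rw [hsval] at E1 E2 ⊢
    rw [hd0] at E0 E1 E2 ⊢
    have hac : P*(a+c) = P*(P+1) := by
      linear_combination E2 - (P-1)*E1 + P*(P+1)*hM'
    have hac' : a + c = P + 1 := mul_left_cancel₀ (ne_of_gt hP0) hac
    have E0' : a + b + c = 1 + P := by linear_combination E0 + P*hM'
    have hbn : (0:ℝ) ≤ b := Nat.cast_nonneg _
    have hb0 : b = 0 := by linarith [E0', hac', hbn]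
    have hcc : (P+1)*c = (P+1)*1 := by linear_combination E1 + hac' - (P-1)*hb0
    have hc1 : c = 1 := mul_left_cancel₀ (by positivity) hcc
    have ha : a = P := by linarith
    rw [ha, hb0, hc1]
    linear_combination (-2)*(P-1)*hM'
  · -- M > 1
    have hb' : (M*P^2) * b = (M*P^2) * (M-1) := by
      linear_combination (-1)*E3 - (2-P)*E2 + (M*P+P-1)*E1 + (M*P)*E0
        + (((P+1+s)*c + (P+1-s)*d)/8)*hs
    have hb : b = M - 1 := mul_left_cancel₀ (by nlinarith [hM0, hP0] : (M*P^2:ℝ) ≠ 0) hb'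
    have ha' : (P^2*(M-1)) * a = (P^2*(M-1)) * (M*(P-1)) := by
      linear_combination E3 - 2*(P-1)*E2 + ((P-1)^2 - M*P)*E1 + (P-1)*M*P*E0
        - (((s-P+1)*c - (s+P-1)*d)/8)*hs
    have ha : a = M*(P-1) := mul_left_cancel₀ (by nlinarith [hP0, hM1] : (P^2*(M-1):ℝ) ≠ 0) ha'
    have hcd : c + d = 2 := by linear_combination E0 - ha - hb
    have hsc : s*c = s*1 := by
      linear_combination E1 + ha - (P-1)*hb + ((s - (P-1))/2)*hcd
    have hc1 : c = 1 := mul_left_cancel₀ (ne_of_gt hs0) hsc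
    have hd1 : d = 1 := by linarith
    rw [ha, hb, hc1, hd1]
    ring

end Aux

/-- the energy of the hyperstar `(S_n)^k` equals
`(k-2)(2n-3) + √((k-2)² + 4(n-1)(k-1))`. -/
theorem stmt_2 (n k : ℕ) (hn : 2 ≤ n) (hk : 2 ≤ k) :
    energy (hyperstar n k) =
      ((k : ℝ) - 2) * (2 * (n : ℝ) - 3) +
        Real.sqrt (((k : ℝ) - 2) ^ 2 + 4 * ((n : ℝ) - 1) * ((k : ℝ) - 1)) := by
  have hA := adjacency_isHermitian (hyperstar n k)
  set M : ℝ := (n:ℝ) - 1 with hMdef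
  set P : ℝ := (k:ℝ) - 1 with hPdef
  have hM : (1:ℝ) ≤ M := by
    rw [hMdef]
    have : (2:ℝ) ≤ (n:ℝ) := by exact_mod_cast hn
    linarith
  have hP : (1:ℝ) ≤ P := by
    rw [hPdef]
    have : (2:ℝ) ≤ (k:ℝ) := by exact_mod_cast hk
    linarith
  have hcastn : ((n-1 : ℕ) : ℝ) = M := by
    rw [hMdef, Nat.cast_sub (by omega), Nat.cast_one]
  have hcastk : ((k-1 : ℕ) : ℝ) = P := by
    rw [hPdef, Nat.cast_sub (by omega), Nat.cast_one]
  set s : ℝ := Real.sqrt (((k : ℝ) - 2) ^ 2 + 4 * ((n : ℝ) - 1) * ((k : ℝ) - 1)) with hsdef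
  have hargnn : (0:ℝ) ≤ ((k : ℝ) - 2) ^ 2 + 4 * ((n : ℝ) - 1) * ((k : ℝ) - 1) := by
    have h1 : (0:ℝ) ≤ ((k:ℝ)-2)^2 := sq_nonneg _
    nlinarith [hM, hP]
  have hs : s^2 = (P-1)^2 + 4*M*P := by
    rw [hsdef, Real.sq_sqrt hargnn, hMdef, hPdef]; ring
  have hs0 : 0 < s := by
    rw [hsdef]
    apply Real.sqrt_pos.mpr
    nlinarith [sq_nonneg ((k:ℝ)-2), hM, hP]
  -- eigenvalue polynomial
  have hroot : ∀ i, (hA.eigenvalues i + 1) * (hA.eigenvalues i - (P-1)) *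
      ((hA.eigenvalues i)^2 - (P-1)*(hA.eigenvalues i) - M*P) = 0 := by
    intro i
    have hv : adjacencyMatrix (hyperstar n k) *ᵥ ⇑(hA.eigenvectorBasis i)
        = hA.eigenvalues i • ⇑(hA.eigenvectorBasis i) := hA.mulVec_eigenvectorBasis i
    have hv2 : hsMat (n-1) (k-1) *ᵥ ⇑(hA.eigenvectorBasis i)
        = hA.eigenvalues i • ⇑(hA.eigenvectorBasis i) := by
      rw [← adj_eq_hsMat]; exact hv
    have hvne : (⇑(hA.eigenvectorBasis i) : Option (Fin (n-1) × Fin (k-1)) → ℝ) ≠ 0 := by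
      intro h0
      exact hA.eigenvectorBasis.orthonormal.ne_zero i (by ext x; exact congrFun h0 x)
    have := hsMat_eig (n-1) (k-1) (hA.eigenvalues i) _ hvne hv2
    rw [hcastn, hcastk] at this
    exact this
  have hN : ((Fintype.card (Option (Fin (n-1) × Fin (k-1))) : ℝ)) = 1 + M*P := by
    simp only [Fintype.card_option, Fintype.card_prod, Fintype.card_fin, Nat.cast_add,
      Nat.cast_mul, Nat.cast_one]
    rw [hcastn, hcastk]
    ring
  have h1 : ∑ i, hA.eigenvalues i = 0 := by
    have := sum_eigenvalues_pow _ hA 1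
    simp only [pow_one] at this
    rw [this, adj_eq_hsMat, hsMat_trace]
  have h2 : ∑ i, (hA.eigenvalues i)^2 = M*P*(P+1) := by
    have := sum_eigenvalues_pow _ hA 2
    rw [this, adj_eq_hsMat, hsMat_trace_sq, hcastn, hcastk]
  have h3 : ∑ i, (hA.eigenvalues i)^3 = M*P*(P-1)*(P+1) := by
    have := sum_eigenvalues_pow _ hA 3
    rw [this, adj_eq_hsMat, hsMat_trace_cube, hcastn, hcastk]
  have key := energy_abstract hA.eigenvalues M P s hM hP hs hs0 hroot hN h1 h2 h3
  show ∑ i, |hA.eigenvalues i| = _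
  rw [key, hMdef, hPdef]
  ring
end

section
/- If G and H are k-uniform hypergraphs, μ is an eigenvalue of A(G) with eigenvector y, and λ is an eigenvalue of A(H) with eigenvector x, then μ + λ is an eigenvalue of A(G ⊕ H) with eigenvector z defined by z_{(v,u)} = y_v x_u. -/
open Matrix BigOperators

set_option linter.unusedSectionVars false

variable {V : Type*} [Fintype V] [DecidableEq V]

/-- The sum `G ⊕ H` of two hypergraphs: vertex set `V₁ × V₂`, with edges `{v} × e`
for `v ∈ V(G)`, `e ∈ E(H)`, and `f × {u}` for `f ∈ E(G)`, `u ∈ V(H)`. -/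
def sumEdges {V₁ V₂ : Type*} [Fintype V₁] [DecidableEq V₁] [Fintype V₂] [DecidableEq V₂]
    (E₁ : Finset (Finset V₁)) (E₂ : Finset (Finset V₂)) : Finset (Finset (V₁ × V₂)) :=
  (((Finset.univ : Finset V₁) ×ˢ E₂).image fun p => p.2.image fun u => (p.1, u)) ∪
  ((E₁ ×ˢ (Finset.univ : Finset V₂)).image fun p => p.1.image fun v => (v, p.2))


/-!
Two distinct vertices `(v, u)` and `(v', u')` of `G ⊕ H` lie together in an edge `{w} × e` exactly
when `v = v' = w` and `u, u' ∈ e`, and in an edge `f × {z}` exactly when `u = u' = z` and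
`v, v' ∈ f`. Hence `A(G ⊕ H) = A(G) ⊗ I + I ⊗ A(H)`, and this Kronecker sum maps `y ⊗ x` to
`(A(G) y) ⊗ x + y ⊗ (A(H) x) = (μ + λ) (y ⊗ x)`.
-/

open Finset Kronecker

section Kronecker

variable {R l m n p : Type*} [CommSemiring R] [Fintype m] [Fintype n]

theorem kronecker_mulVec_prod (A : Matrix l m R) (B : Matrix p n R) (y : m → R) (x : n → R) :
    (A ⊗ₖ B) *ᵥ (fun q => y q.1 * x q.2) = fun q => (A *ᵥ y) q.1 * (B *ᵥ x) q.2 := by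
  ext ⟨i, j⟩
  simp only [mulVec, dotProduct, kronecker_apply, Fintype.sum_prod_type, sum_mul_sum]
  exact sum_congr rfl fun _ _ => sum_congr rfl fun _ _ => by ring

theorem kronecker_one_add_one_kronecker_mulVec_prod [DecidableEq m] [DecidableEq n]
    {A : Matrix m m R} {B : Matrix n n R} {μ ν : R} {y : m → R} {x : n → R}
    (hA : A *ᵥ y = μ • y) (hB : B *ᵥ x = ν • x) :
    (A ⊗ₖ 1 + 1 ⊗ₖ B) *ᵥ (fun q => y q.1 * x q.2) = (μ + ν) • fun q => y q.1 * x q.2 := by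
  rw [add_mulVec, kronecker_mulVec_prod, kronecker_mulVec_prod, hA, hB, one_mulVec, one_mulVec]
  ext q
  simp only [Pi.add_apply, Pi.smul_apply, smul_eq_mul]
  ring

end Kronecker

theorem mul_fst_snd_ne_zero {R m n : Type*} [MulZeroClass R] [NoZeroDivisors R] {y : m → R}
    {x : n → R} (hy : y ≠ 0) (hx : x ≠ 0) : (fun q : m × n => y q.1 * x q.2) ≠ 0 := by
  obtain ⟨v, hv⟩ := Function.ne_iff.1 hy
  obtain ⟨u, hu⟩ := Function.ne_iff.1 hx
  exact Function.ne_iff.2 ⟨(v, u), mul_ne_zero hv hu⟩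

section SumEdges

variable {V₁ V₂ : Type*} [Fintype V₁] [DecidableEq V₁] [Fintype V₂] [DecidableEq V₂]

theorem card_filter_mem_image_prodMk_left (E : Finset (Finset V₂)) (v v' : V₁) (u u' : V₂) :
    #(((univ ×ˢ E).image fun p => p.2.image fun u => (p.1, u)).filter
        fun g => (v, u) ∈ g ∧ (v', u') ∈ g) =
      if v = v' then #(E.filter fun e => u ∈ e ∧ u' ∈ e) else 0 := by
  rw [filter_image, card_image_of_injOn]
  · split_ifs with h
    · subst h
      refine card_nbij' Prod.snd (Prod.mk v) ?_ ?_ ?_ ?_ <;>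
        simp +contextual [Set.MapsTo, Set.LeftInvOn]
    · simp only [card_eq_zero, filter_eq_empty_iff, mem_product, mem_univ, true_and, mem_image,
        Prod.mk.injEq, exists_eq_right_right, not_and, and_imp, Prod.forall]
      rintro _ _ _ _ rfl _ rfl
      exact h rfl
  · rintro ⟨w, e⟩ hwe ⟨w', e'⟩ hwe' heq
    simp only [mem_image, Prod.mk.injEq, exists_eq_right_right, coe_filter, mem_product,
      mem_univ, true_and, Set.mem_ofPred_eq] at hwe hwe'
    obtain rfl : w = w' := hwe.2.1.2.trans hwe'.2.1.2.symm
    exact Prod.ext rfl (image_injective (Prod.mk_right_injective w) heq)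

theorem card_filter_mem_image_prodMk_right (E : Finset (Finset V₁)) (v v' : V₁) (u u' : V₂) :
    #(((E ×ˢ univ).image fun p => p.1.image fun v => (v, p.2)).filter
        fun g => (v, u) ∈ g ∧ (v', u') ∈ g) =
      if u = u' then #(E.filter fun f => v ∈ f ∧ v' ∈ f) else 0 := by
  rw [filter_image, card_image_of_injOn]
  · split_ifs with h
    · subst h
      refine card_nbij' Prod.fst (·, u) ?_ ?_ ?_ ?_ <;>
        simp +contextual [Set.MapsTo, Set.LeftInvOn]
    · simp only [card_eq_zero, filter_eq_empty_iff, mem_product, mem_univ, and_true, mem_image,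
        Prod.mk.injEq, ↓existsAndEq, true_and, not_and, and_imp, Prod.forall]
      rintro _ _ _ _ rfl _ rfl
      exact h rfl
  · rintro ⟨f, w⟩ hfw ⟨f', w'⟩ hfw' heq
    simp only [mem_image, Prod.mk.injEq, ↓existsAndEq, true_and, coe_filter, mem_product,
      mem_univ, and_true, Set.mem_ofPred_eq] at hfw hfw'
    obtain rfl : w = w' := hfw.2.1.2.trans hfw'.2.1.2.symm
    exact Prod.ext (image_injective (Prod.mk_left_injective w) heq) rfl

theorem card_filter_sumEdges (E₁ : Finset (Finset V₁)) (E₂ : Finset (Finset V₂))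
    {a b : V₁ × V₂} (hab : a ≠ b) :
    #((sumEdges E₁ E₂).filter fun g => a ∈ g ∧ b ∈ g) =
      (if a.1 = b.1 then #(E₂.filter fun e => a.2 ∈ e ∧ b.2 ∈ e) else 0) +
      (if a.2 = b.2 then #(E₁.filter fun f => a.1 ∈ f ∧ b.1 ∈ f) else 0) := by
  rw [sumEdges, filter_union, card_union_of_disjoint, card_filter_mem_image_prodMk_left,
    card_filter_mem_image_prodMk_right]
  -- An edge `{w} × e = f × {z}` has constant coordinates, so it cannot contain both `a` and `b`.
  rw [disjoint_left]
  rintro g hg₁ hg₂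
  simp only [mem_filter, mem_image] at hg₁ hg₂
  obtain ⟨⟨⟨w, e⟩, -, rfl⟩, ha₁, hb₁⟩ := hg₁
  obtain ⟨⟨⟨f, z⟩, -, hfz⟩, -, -⟩ := hg₂
  obtain ⟨_, -, rfl⟩ := mem_image.1 ha₁
  obtain ⟨_, -, rfl⟩ := mem_image.1 hb₁
  rw [← hfz] at ha₁ hb₁
  obtain ⟨_, -, ha⟩ := mem_image.1 ha₁
  obtain ⟨_, -, hb⟩ := mem_image.1 hb₁
  exact hab (Prod.ext rfl ((Prod.ext_iff.1 ha).2.symm.trans (Prod.ext_iff.1 hb).2))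

theorem adjacencyMatrix_sumEdges (E₁ : Finset (Finset V₁)) (E₂ : Finset (Finset V₂)) :
    adjacencyMatrix (sumEdges E₁ E₂).val =
      adjacencyMatrix E₁.val ⊗ₖ 1 + 1 ⊗ₖ adjacencyMatrix E₂.val := by
  ext ⟨v, u⟩ ⟨v', u'⟩
  simp only [adjacencyMatrix, of_apply, Matrix.add_apply, kronecker_apply, one_apply,
    ← filter_val, card_val]
  by_cases hv : v = v' <;> by_cases hu : u = u'
  · simp [hv, hu]
  all_goals
    have hne : (v, u) ≠ (v', u') := by simp [hv, hu]
    rw [if_neg hne, card_filter_sumEdges E₁ E₂ hne]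
    simp [hv, hu]

end SumEdges

theorem stmt_4_general {V₁ V₂ : Type*} [Fintype V₁] [DecidableEq V₁] [Fintype V₂] [DecidableEq V₂]
    (E₁ : Finset (Finset V₁)) (E₂ : Finset (Finset V₂))
    (mu lam : ℝ) (y : V₁ → ℝ) (x : V₂ → ℝ) (hy : y ≠ 0) (hx : x ≠ 0)
    (hmu : (adjacencyMatrix E₁.val).mulVec y = mu • y)
    (hlam : (adjacencyMatrix E₂.val).mulVec x = lam • x) :
    (adjacencyMatrix (sumEdges E₁ E₂).val).mulVec (fun p => y p.1 * x p.2) =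
      (mu + lam) • (fun p : V₁ × V₂ => y p.1 * x p.2) ∧
    (fun p : V₁ × V₂ => y p.1 * x p.2) ≠ 0 :=
  ⟨by rw [adjacencyMatrix_sumEdges]; exact kronecker_one_add_one_kronecker_mulVec_prod hmu hlam,
    mul_fst_snd_ne_zero hy hx⟩

/-- if `μ` is an eigenvalue of `A(G)` with eigenvector `y` and `λ` an
eigenvalue of `A(H)` with eigenvector `x`, then `μ + λ` is an eigenvalue of `A(G ⊕ H)`
with eigenvector `z (v,u) = y v * x u`. -/
theorem stmt_4 {V₁ V₂ : Type*} [Fintype V₁] [DecidableEq V₁] [Fintype V₂] [DecidableEq V₂]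
    (k : ℕ) (hk : 2 ≤ k)
    (E₁ : Finset (Finset V₁)) (E₂ : Finset (Finset V₂))
    (hu₁ : ∀ e ∈ E₁, e.card = k) (hu₂ : ∀ e ∈ E₂, e.card = k)
    (mu lam : ℝ) (y : V₁ → ℝ) (x : V₂ → ℝ) (hy : y ≠ 0) (hx : x ≠ 0)
    (hmu : (adjacencyMatrix E₁.val).mulVec y = mu • y)
    (hlam : (adjacencyMatrix E₂.val).mulVec x = lam • x) :
    (adjacencyMatrix (sumEdges E₁ E₂).val).mulVec (fun p => y p.1 * x p.2) =
      (mu + lam) • (fun p : V₁ × V₂ => y p.1 * x p.2) ∧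
    (fun p : V₁ × V₂ => y p.1 * x p.2) ≠ 0 :=
  stmt_4_general E₁ E₂ mu lam y x hy hx hmu hlam
end

section
/- If the energy of a k-uniform hypergraph H is a rational number, then it is an even integer. -/
open Matrix BigOperators

set_option linter.unusedSectionVars false

variable {V : Type*} [Fintype V] [DecidableEq V]

/-! The eigenvalues of the adjacency matrix are roots of the monic integer characteristic
polynomial, hence algebraic integers. Since the trace vanishes, the energy is twice the sum of the
positive eigenvalues, so half the energy is an algebraic integer; if it is rational, it is an
integer. -/

theorem Finset.sum_abs_eq_two_mul_sum_filter_pos_sub_sum {ι α : Type*} [CommRing α]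
    [LinearOrder α] [IsStrictOrderedRing α] (s : Finset ι) (f : ι → α) :
    ∑ i ∈ s, |f i| = 2 * ∑ i ∈ s with 0 < f i, f i - ∑ i ∈ s, f i := by
  have habs : ∑ i ∈ s, |f i| = ∑ i ∈ s with 0 < f i, f i - ∑ i ∈ s with ¬0 < f i, f i := by
    rw [← sum_filter_add_sum_filter_not s (fun i => 0 < f i), sub_eq_add_neg, ← sum_neg_distrib]
    congr 1
    · exact sum_congr rfl fun i hi => abs_of_pos (mem_filter.mp hi).2
    · exact sum_congr rfl fun i hi => abs_of_nonpos (not_lt.mp (mem_filter.mp hi).2)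
  rw [habs, ← sum_filter_add_sum_filter_not s (fun i => 0 < f i) f]
  ring

theorem Matrix.isIntegral_of_mem_spectrum_map {n R K : Type*} [Fintype n] [DecidableEq n]
    [CommRing R] [Field K] [Algebra R K] (M : Matrix n n R) {μ : K}
    (hμ : μ ∈ spectrum K (M.map (algebraMap R K))) : IsIntegral R μ := by
  refine ⟨M.charpoly, M.charpoly_monic, ?_⟩
  rw [Polynomial.eval₂_eq_eval_map, ← charpoly_map]
  exact mem_spectrum_iff_isRoot_charpoly.mp hμ

theorem Matrix.IsHermitian.sum_abs_eigenvalues_of_trace_eq_zero {n : Type*} [Fintype n]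
    [DecidableEq n] {A : Matrix n n ℝ} (hA : A.IsHermitian) (htr : A.trace = 0) :
    ∑ i, |hA.eigenvalues i| = 2 * ∑ i with 0 < hA.eigenvalues i, hA.eigenvalues i := by
  have hsum : ∑ i, hA.eigenvalues i = 0 := by simpa [hA.trace_eq_sum_eigenvalues] using htr
  rw [Finset.sum_abs_eq_two_mul_sum_filter_pos_sub_sum, hsum, sub_zero]

theorem exists_int_eq_of_isIntegral_ratCast {q : ℚ} (hq : IsIntegral ℤ (q : ℝ)) :
    ∃ z : ℤ, (q : ℝ) = z := by
  have hq' : IsIntegral ℤ q :=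
    (isIntegral_algebraMap_iff (algebraMap ℚ ℝ).injective).mp hq
  obtain ⟨z, hz⟩ := IsIntegrallyClosed.isIntegral_iff.mp hq'
  exact ⟨z, by rw [← hz]; simp⟩

theorem exists_adjacencyMatrix_eq_map_int (E : Multiset (Finset V)) :
    ∃ M : Matrix V V ℤ, adjacencyMatrix E = M.map (algebraMap ℤ ℝ) :=
  ⟨Matrix.of fun i j => if i = j then 0 else ((E.filter (fun e => i ∈ e ∧ j ∈ e)).card : ℤ),
    by ext i j; by_cases h : i = j <;> simp [adjacencyMatrix, h]⟩

theorem trace_adjacencyMatrix (E : Multiset (Finset V)) : (adjacencyMatrix E).trace = 0 := by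
  simp [Matrix.trace, adjacencyMatrix]

theorem exists_isIntegral_energy_eq_two_mul (E : Multiset (Finset V)) :
    ∃ t : ℝ, IsIntegral ℤ t ∧ energy E = 2 * t := by
  set hA := adjacency_isHermitian E
  obtain ⟨M, hM⟩ := exists_adjacencyMatrix_eq_map_int E
  have hint (i : V) : IsIntegral ℤ (hA.eigenvalues i) :=
    M.isIntegral_of_mem_spectrum_map (hM ▸ hA.eigenvalues_mem_spectrum_real i)
  exact ⟨_, IsIntegral.sum _ fun i _ => hint i,
    hA.sum_abs_eigenvalues_of_trace_eq_zero (trace_adjacencyMatrix E)⟩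

theorem stmt_8_general (E : Finset (Finset V))
    (hq : ∃ q : ℚ, energy E.val = (q : ℝ)) :
    ∃ z : ℤ, energy E.val = ((2 * z : ℤ) : ℝ) := by
  obtain ⟨q, hq⟩ := hq
  obtain ⟨t, ht, hEt⟩ := exists_isIntegral_energy_eq_two_mul E.val
  have htq : t = ((q / 2 : ℚ) : ℝ) := by push_cast; linarith
  obtain ⟨z, hz⟩ := exists_int_eq_of_isIntegral_ratCast (htq ▸ ht)
  exact ⟨z, by rw [hEt, htq, hz]; push_cast; ring⟩

/-- if the energy of a `k`-uniform hypergraph is rational, then it is an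
even integer. -/
theorem stmt_8 (k : ℕ) (hk : 2 ≤ k) (E : Finset (Finset V))
    (hunif : ∀ e ∈ E, e.card = k)
    (hq : ∃ q : ℚ, energy E.val = (q : ℝ)) :
    ∃ z : ℤ, energy E.val = ((2 * z : ℤ) : ℝ) :=
  stmt_8_general E hq
end

section
/- Let p ≥ 1 and 0 ≤ q ≤ p-1 be integers and t an odd integer. Then the energy of a k-uniform hypergraph H is never equal to the p-th root of 2^q · t. -/
open Matrix BigOperators

set_option linter.unusedSectionVars false

variable {V : Type*} [Fintype V] [DecidableEq V]

/-
The adjacency eigenvalues are roots of the monic integer characteristic polynomial, hence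
algebraic integers, and they sum to the trace `0`. So the energy is `2 S` with `S` the sum of the
positive eigenvalues, an algebraic integer. If `energy ^ p = 2 ^ q * t` with `q < p` and `t` odd,
then `S ^ p = t / 2 ^ (p - q)` is a rational algebraic integer that is not an integer.
-/

theorem Finset.sum_abs_eq_two_mul_sum_pos {ι : Type*} (s : Finset ι) (f : ι → ℝ)
    (hf : ∑ i ∈ s, f i = 0) : ∑ i ∈ s, |f i| = 2 * ∑ i ∈ s with 0 < f i, f i := by
  have habs : ∀ i, |f i| + f i = if 0 < f i then 2 * f i else 0 := by
    intro i
    split_ifs with h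
    · rw [abs_of_pos h]; ring
    · rw [abs_of_nonpos (not_lt.mp h)]; ring
  calc ∑ i ∈ s, |f i| = ∑ i ∈ s, (|f i| + f i) := by rw [sum_add_distrib, hf, add_zero]
    _ = 2 * ∑ i ∈ s with 0 < f i, f i := by simp_rw [habs, ← sum_filter, mul_sum]

open Polynomial in
theorem Matrix.IsHermitian.isIntegral_eigenvalues_of_eq_map_intCast {n : Type*} [Fintype n]
    [DecidableEq n] {M : Matrix n n ℝ} (hM : M.IsHermitian) {M₀ : Matrix n n ℤ}
    (hM₀ : M = M₀.map (↑)) (i : n) : IsIntegral ℤ (hM.eigenvalues i) := by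
  refine ⟨M₀.charpoly, M₀.charpoly_monic, ?_⟩
  have hchar : M₀.charpoly.map (algebraMap ℤ ℝ) = M.charpoly := by
    rw [← charpoly_map, hM₀]; rfl
  rw [eval₂_eq_eval_map, hchar, hM.charpoly_eq, eval_prod]
  exact Finset.prod_eq_zero (Finset.mem_univ i) (by simp)

theorem not_isIntegral_odd_div_two_pow {t : ℤ} (ht : Odd t) {n : ℕ} (hn : n ≠ 0) :
    ¬ IsIntegral ℤ ((t : ℝ) / 2 ^ n) := by
  intro h
  have hℚ : IsIntegral ℤ ((t : ℚ) / 2 ^ n) := by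
    refine (isIntegral_algHom_iff (algebraMap ℚ ℝ).toIntAlgHom Rat.cast_injective).mp ?_
    simpa using h
  obtain ⟨z, hz⟩ := IsIntegrallyClosed.isIntegral_iff.mp hℚ
  have htz : t = z * 2 ^ n := by
    rw [eq_div_iff (by positivity)] at hz
    exact_mod_cast (by simpa using hz.symm : (t : ℚ) = z * 2 ^ n)
  obtain ⟨m, rfl⟩ := Nat.exists_eq_succ_of_ne_zero hn
  refine Int.not_even_iff_odd.mpr ht ⟨z * 2 ^ m, ?_⟩
  rw [htz, pow_succ]; ring

lemma exists_adjacencyMatrix_eq_map_intCast (E : Multiset (Finset V)) :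
    ∃ A₀ : Matrix V V ℤ, adjacencyMatrix E = A₀.map (↑) :=
  ⟨Matrix.of fun i j => if i = j then 0 else ((E.filter (fun e => i ∈ e ∧ j ∈ e)).card : ℤ), by
    ext i j; by_cases h : i = j <;> simp [adjacencyMatrix, h]⟩

lemma sum_eigenvalues_adjacencyMatrix (E : Multiset (Finset V)) :
    ∑ i, (adjacency_isHermitian E).eigenvalues i = 0 := by
  have htrace := (adjacency_isHermitian E).trace_eq_sum_eigenvalues
  simp only [RCLike.ofReal_real_eq_id, id] at htrace
  rw [← htrace]
  simp [Matrix.trace, adjacencyMatrix]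

lemma energy_eq_two_mul_sum_pos (E : Multiset (Finset V)) :
    energy E = 2 * ∑ i with 0 < (adjacency_isHermitian E).eigenvalues i,
      (adjacency_isHermitian E).eigenvalues i :=
  Finset.sum_abs_eq_two_mul_sum_pos _ _ (sum_eigenvalues_adjacencyMatrix E)

lemma isIntegral_half_energy (E : Multiset (Finset V)) : IsIntegral ℤ (energy E / 2) := by
  obtain ⟨A₀, hA₀⟩ := exists_adjacencyMatrix_eq_map_intCast E
  rw [energy_eq_two_mul_sum_pos, mul_div_cancel_left₀ _ two_ne_zero]
  exact IsIntegral.sum _ fun i _ ↦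
    (adjacency_isHermitian E).isIntegral_eigenvalues_of_eq_map_intCast hA₀ i

theorem stmt_9_general (E : Finset (Finset V))
    (p q : ℕ) (hp : 1 ≤ p) (hq : q ≤ p - 1) (t : ℤ) (ht : Odd t) :
    energy E.val ^ p ≠ 2 ^ q * (t : ℝ) := by
  intro h
  have hpow : (energy E.val / 2) ^ p = t / 2 ^ (p - q) := by
    rw [div_pow, h, div_eq_div_iff (by positivity) (by positivity), mul_comm (2 ^ q : ℝ),
      mul_assoc, ← pow_add, Nat.add_sub_cancel' (by omega)]
  exact not_isIntegral_odd_div_two_pow ht (by omega) (hpow ▸ (isIntegral_half_energy _).pow p)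

/-- for integers `p ≥ 1`, `0 ≤ q ≤ p-1` and odd `t`, the energy of a
`k`-uniform hypergraph is never the `p`-th root of `2^q * t`, i.e. the `p`-th power of
the energy is never `2^q * t`. -/
theorem stmt_9 (k : ℕ) (hk : 2 ≤ k) (E : Finset (Finset V))
    (hunif : ∀ e ∈ E, e.card = k)
    (p q : ℕ) (hp : 1 ≤ p) (hq : q ≤ p - 1) (t : ℤ) (ht : Odd t) :
    energy E.val ^ p ≠ 2 ^ q * (t : ℝ) :=
  stmt_9_general E p q hp hq t ht
end

section
/- For any hypergraph H and any vertex v, the energy of H - v is at most the energy of H, where H - v is obtained by removing v from the vertex set and from every edge containing it. -/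
open Matrix BigOperators

set_option linter.unusedSectionVars false

variable {V : Type*} [Fintype V] [DecidableEq V]

/-- Vertex deletion: remove `v` from the vertex set and from every edge. -/
def removeVertex (E : Multiset (Finset V)) (v : V) :
    Multiset (Finset {u : V // u ≠ v}) :=
  E.map fun e => e.subtype (· ≠ v)

/-!
The energy `∑ |λᵢ|` of a real symmetric matrix `A` is the maximum of `tr (A O)` over orthogonal
`O`: writing `A = U D Uᵀ`, the diagonal entries of the orthogonal matrix `Uᵀ O U` lie in `[-1, 1]`,
and `O = U (sign D) Uᵀ` attains the bound. For a splitting of the index set into `p` and its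
complement, testing against block-diagonal orthogonal matrices `diag (O₁, O₂)` gives the pinching
inequality `‖A₁₁‖ + ‖A₂₂‖ ≤ ‖A‖` for this norm. The adjacency matrix of `H - v` is the principal
submatrix of that of `H` away from `v`.
-/

namespace Matrix

section
variable {m n R : Type*} [Fintype m] [Fintype n]

lemma trace_submatrix_equiv [AddCommMonoid R] (A : Matrix n n R) (e : m ≃ n) :
    (A.submatrix e e).trace = A.trace :=
  e.sum_comp fun i => A i i

lemma trace_fromBlocks [AddCommMonoid R] (A : Matrix m m R) (B : Matrix m n R)
    (C : Matrix n m R) (D : Matrix n n R) : (fromBlocks A B C D).trace = A.trace + D.trace :=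
  Fintype.sum_sum_type _

variable [DecidableEq m] [DecidableEq n] [CommRing R] [StarRing R]

lemma submatrix_mem_unitaryGroup {U : Matrix n n R} (hU : U ∈ unitaryGroup n R) (e : m ≃ n) :
    U.submatrix e e ∈ unitaryGroup m R := by
  rw [mem_unitaryGroup_iff, star_eq_conjTranspose, conjTranspose_submatrix, submatrix_mul_equiv,
    ← star_eq_conjTranspose, mem_unitaryGroup_iff.mp hU, submatrix_one_equiv]

lemma fromBlocks_mem_unitaryGroup {U : Matrix m m R} {V : Matrix n n R}
    (hU : U ∈ unitaryGroup m R) (hV : V ∈ unitaryGroup n R) :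
    fromBlocks U 0 0 V ∈ unitaryGroup (m ⊕ n) R := by
  rw [mem_unitaryGroup_iff, star_eq_conjTranspose, fromBlocks_conjTranspose, fromBlocks_multiply]
  simp [← star_eq_conjTranspose, mem_unitaryGroup_iff.mp hU, mem_unitaryGroup_iff.mp hV]

end

variable {n : Type*} [Fintype n] [DecidableEq n] {A : Matrix n n ℝ}

lemma IsHermitian.trace_mul_eq_trace_diagonal_mul (hA : A.IsHermitian) (O : Matrix n n ℝ) :
    (A * O).trace = (diagonal hA.eigenvalues *
      ((star hA.eigenvectorUnitary : Matrix n n ℝ) * O * hA.eigenvectorUnitary)).trace := by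
  conv_lhs => rw [hA.spectral_theorem]
  simp only [Unitary.conjStarAlgAut_apply, Function.comp_def, RCLike.ofReal_real_eq_id, id]
  rw [mul_assoc, mul_assoc, trace_mul_comm]
  simp only [mul_assoc]

lemma IsHermitian.trace_mul_le_sum_abs_eigenvalues (hA : A.IsHermitian) {O : Matrix n n ℝ}
    (hO : O ∈ unitaryGroup n ℝ) : (A * O).trace ≤ ∑ i, |hA.eigenvalues i| := by
  set M := (star hA.eigenvectorUnitary : Matrix n n ℝ) * O * hA.eigenvectorUnitary
  have hM : M ∈ unitaryGroup n ℝ :=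
    mul_mem (mul_mem (star hA.eigenvectorUnitary).2 hO) hA.eigenvectorUnitary.2
  rw [hA.trace_mul_eq_trace_diagonal_mul, trace]
  refine Finset.sum_le_sum fun i _ => ?_
  have hMii : |M i i| ≤ 1 := by simpa using entry_norm_bound_of_unitary hM i i
  calc (diagonal hA.eigenvalues * M) i i = hA.eigenvalues i * M i i := diagonal_mul _ _ _ _
    _ ≤ |hA.eigenvalues i| * |M i i| := (le_abs_self _).trans_eq (abs_mul _ _)
    _ ≤ |hA.eigenvalues i| := mul_le_of_le_one_right (abs_nonneg _) hMii

lemma IsHermitian.exists_mem_unitaryGroup_trace_mul_eq (hA : A.IsHermitian) :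
    ∃ O ∈ unitaryGroup n ℝ, (A * O).trace = ∑ i, |hA.eigenvalues i| := by
  let s : n → ℝ := fun i => if 0 ≤ hA.eigenvalues i then 1 else -1
  have hss : ∀ i, s i * s i = 1 := fun i => by simp only [s]; split_ifs <;> norm_num
  have hs : diagonal s ∈ unitaryGroup n ℝ := by
    rw [mem_unitaryGroup_iff, star_eq_conjTranspose, diagonal_conjTranspose,
      diagonal_mul_diagonal]
    simp only [Pi.star_apply, star_trivial, hss, diagonal_one]
  refine ⟨hA.eigenvectorUnitary * diagonal s * star hA.eigenvectorUnitary, ?_, ?_⟩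
  · exact mul_mem (mul_mem hA.eigenvectorUnitary.2 hs) (star hA.eigenvectorUnitary).2
  · rw [hA.trace_mul_eq_trace_diagonal_mul]
    have hU : (star hA.eigenvectorUnitary : Matrix n n ℝ) * hA.eigenvectorUnitary = 1 :=
      Unitary.coe_star_mul_self _
    simp only [mul_assoc, Unitary.coe_star, hU, mul_one]
    rw [← mul_assoc (star _), hU, one_mul, diagonal_mul_diagonal, trace_diagonal]
    refine Finset.sum_congr rfl fun i _ => ?_
    simp only [s]
    split_ifs with h
    · rw [mul_one, abs_of_nonneg h]
    · rw [mul_neg_one, abs_of_neg (not_le.mp h)]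

lemma IsHermitian.sum_abs_eigenvalues_submatrix_add_le (hA : A.IsHermitian) (p : n → Prop)
    [DecidablePred p] :
    ∑ i, |(hA.submatrix ((↑) : {i // p i} → n)).eigenvalues i| +
      ∑ i, |(hA.submatrix ((↑) : {i // ¬p i} → n)).eigenvalues i| ≤
        ∑ i, |hA.eigenvalues i| := by
  obtain ⟨O₁, hO₁, h₁⟩ :=
    (hA.submatrix ((↑) : {i // p i} → n)).exists_mem_unitaryGroup_trace_mul_eq
  obtain ⟨O₂, hO₂, h₂⟩ :=
    (hA.submatrix ((↑) : {i // ¬p i} → n)).exists_mem_unitaryGroup_trace_mul_eq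
  let e := Equiv.sumCompl p
  let O := (Matrix.fromBlocks O₁ 0 0 O₂).submatrix e.symm e.symm
  have hO : O ∈ unitaryGroup n ℝ :=
    submatrix_mem_unitaryGroup (fromBlocks_mem_unitaryGroup hO₁ hO₂) e.symm
  let ι : {i // p i} → n := (↑)
  let κ : {i // ¬p i} → n := (↑)
  have hblocks : A.submatrix e e = Matrix.fromBlocks
      (A.submatrix ι ι) (A.submatrix ι κ) (A.submatrix κ ι) (A.submatrix κ κ) := by
    ext (i | i) (j | j) <;> rfl
  have htr : (A * O).trace =
      (A.submatrix ι ι * O₁).trace + (A.submatrix κ κ * O₂).trace := by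
    rw [← trace_submatrix_equiv _ e, ← submatrix_mul_equiv (e₂ := e), hblocks,
      submatrix_submatrix, e.symm_comp_self, submatrix_id_id, fromBlocks_multiply,
      trace_fromBlocks]
    simp
  rw [← h₁, ← h₂, ← htr]
  exact hA.trace_mul_le_sum_abs_eigenvalues hO

end Matrix

lemma adjacencyMatrix_removeVertex (E : Multiset (Finset V)) (v : V) :
    adjacencyMatrix (removeVertex E v) =
      (adjacencyMatrix E).submatrix ((↑) : {u // u ≠ v} → V) (↑) := by
  ext i j
  simp only [adjacencyMatrix, removeVertex, of_apply, submatrix_apply, Subtype.ext_iff,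
    Multiset.filter_map, Multiset.card_map, Function.comp_def, Finset.mem_subtype]

theorem stmt_10_general (E : Finset (Finset V)) (v : V) :
    energy (removeVertex E.val v) ≤ energy E.val := by
  have key := (adjacency_isHermitian E.val).sum_abs_eigenvalues_submatrix_add_le (· ≠ v)
  unfold energy
  simp only [adjacencyMatrix_removeVertex]
  exact (le_add_of_nonneg_right (Finset.sum_nonneg fun _ _ => abs_nonneg _)).trans key

/-- the energy of `H - v` is at most the energy of `H`. -/
theorem stmt_10 (E : Finset (Finset V)) (hcard : ∀ e ∈ E, 2 ≤ e.card) (v : V) :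
    energy (removeVertex E.val v) ≤ energy E.val :=
  stmt_10_general E v
end

section
/- For any hypergraph H and edge e ∈ E(H), |E(H) - E(H - e)| ≤ 2|e| - 2, where H - e is the hypergraph obtained by deleting the edge e. -/
open Matrix BigOperators

set_option linter.unusedSectionVars false

variable {V : Type*} [Fintype V] [DecidableEq V]

/-! The energy is the trace norm `‖A‖₁ = ∑ |λᵢ|` of the adjacency matrix, and
`A(H) = A(H - e) + Aₑ`, where `Aₑ` is `J - I` on the vertices of `e`. The trace norm satisfies
the triangle inequality: if `S = U sign(D) Uᵀ` is the sign matrix of `A = U D Uᵀ`, then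
`‖A‖₁ = tr (S A)`, while `|tr (S B)| ≤ ‖B‖₁` for every symmetric `B` because `S` is an
orthogonal conjugate of a diagonal matrix with entries in `[-1, 1]`. Hence
`|E(H) - E(H - e)| ≤ ‖Aₑ‖₁`. With `k = |e|`, `Aₑ (Aₑ + 1) (Aₑ - (k - 1)) = 0`, so the eigenvalues of
`Aₑ` lie in `{0, -1, k - 1}`; together with `tr Aₑ = 0` and `tr Aₑ² = k² - k` this gives
`‖Aₑ‖₁ = 2k - 2`. -/

namespace Matrix

lemma trace_conj_of_mem_unitaryGroup {U : Matrix V V ℝ} (hU : U ∈ unitaryGroup V ℝ)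
    (X : Matrix V V ℝ) : trace (U * X * star U) = trace X := by
  rw [trace_mul_cycle, mem_unitaryGroup_iff'.mp hU, Matrix.one_mul]

lemma sum_sq_apply_eq_one_of_mem_unitaryGroup {M : Matrix V V ℝ} (hM : M ∈ unitaryGroup V ℝ)
    (j : V) : ∑ i, M i j ^ 2 = 1 := by
  simpa [mul_apply, one_apply_eq, sq] using congr_fun₂ (mem_unitaryGroup_iff'.mp hM) j j

lemma trace_diagonal_mul_mul_diagonal_mul_star (s μ : V → ℝ) (M : Matrix V V ℝ) :
    trace (diagonal s * M * diagonal μ * star M) = ∑ i, ∑ j, s i * M i j ^ 2 * μ j := by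
  refine Finset.sum_congr rfl fun i _ => ?_
  simp only [diag, mul_apply (M := diagonal s * M * diagonal μ), mul_diagonal, diagonal_mul,
    star_apply, star_trivial]
  exact Finset.sum_congr rfl fun j _ => by ring

lemma abs_trace_conj_diagonal_mul_conj_diagonal_le {U W : Matrix V V ℝ}
    (hU : U ∈ unitaryGroup V ℝ) (hW : W ∈ unitaryGroup V ℝ) {s : V → ℝ} (hs : ∀ i, |s i| ≤ 1)
    (μ : V → ℝ) :
    |trace (U * diagonal s * star U * (W * diagonal μ * star W))| ≤ ∑ j, |μ j| := by
  set M := star U * W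
  have hM : M ∈ unitaryGroup V ℝ := mul_mem (Unitary.star_mem hU) hW
  have hconj : U * diagonal s * star U * (W * diagonal μ * star W)
      = U * (diagonal s * M * diagonal μ * star M) * star U := by
    simp only [M, star_mul, star_star, Matrix.mul_assoc, mem_unitaryGroup_iff.mp hU,
      Matrix.mul_one]
  rw [hconj, trace_conj_of_mem_unitaryGroup hU, trace_diagonal_mul_mul_diagonal_mul_star]
  calc |∑ i, ∑ j, s i * M i j ^ 2 * μ j| ≤ ∑ i, ∑ j, M i j ^ 2 * |μ j| := by
        refine (Finset.abs_sum_le_sum_abs _ _).trans (Finset.sum_le_sum fun i _ => ?_)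
        refine (Finset.abs_sum_le_sum_abs _ _).trans (Finset.sum_le_sum fun j _ => ?_)
        rw [abs_mul, abs_mul, abs_of_nonneg (sq_nonneg (M i j))]
        gcongr
        exact mul_le_of_le_one_left (sq_nonneg _) (hs i)
    _ = ∑ j, |μ j| := by
        rw [Finset.sum_comm]
        simp only [← Finset.sum_mul, sum_sq_apply_eq_one_of_mem_unitaryGroup hM, one_mul]

lemma trace_conj_diagonal_mul_conj_diagonal {U : Matrix V V ℝ} (hU : U ∈ unitaryGroup V ℝ)
    (s t : V → ℝ) :
    trace (U * diagonal s * star U * (U * diagonal t * star U)) = ∑ i, s i * t i := by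
  calc _ = trace (U * (diagonal s * (star U * U) * diagonal t) * star U) := by
        simp only [Matrix.mul_assoc]
    _ = ∑ i, s i * t i := by
        rw [trace_conj_of_mem_unitaryGroup hU, mem_unitaryGroup_iff'.mp hU, Matrix.mul_one,
          diagonal_mul_diagonal, trace_diagonal]

end Matrix

namespace Matrix.IsHermitian

variable {A B C : Matrix V V ℝ}

lemma conj_diagonal_eigenvalues (hA : A.IsHermitian) :
    (hA.eigenvectorUnitary : Matrix V V ℝ) * diagonal hA.eigenvalues *
      star (hA.eigenvectorUnitary : Matrix V V ℝ) = A := by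
  conv_rhs => rw [hA.spectral_theorem, Unitary.conjStarAlgAut_apply]
  rw [RCLike.ofReal_real_eq_id, Function.id_comp]

lemma sum_sq_eigenvalues (hA : A.IsHermitian) :
    ∑ i, hA.eigenvalues i ^ 2 = trace (A * A) := by
  conv_rhs => rw [← hA.conj_diagonal_eigenvalues]
  simp only [trace_conj_diagonal_mul_conj_diagonal hA.eigenvectorUnitary.2, sq]

lemma eval_eigenvalues_eq_zero (hA : A.IsHermitian) {p : Polynomial ℝ}
    (hp : Polynomial.aeval A p = 0) (i : V) : p.eval (hA.eigenvalues i) = 0 := by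
  have : Nonempty V := ⟨i⟩
  simpa [hp] using
    spectrum.subset_polynomial_aeval A p ⟨_, hA.eigenvalues_mem_spectrum_real i, rfl⟩

noncomputable def traceNorm (hA : A.IsHermitian) : ℝ := ∑ i, |hA.eigenvalues i|

noncomputable def signMatrix (hA : A.IsHermitian) : Matrix V V ℝ :=
  (hA.eigenvectorUnitary : Matrix V V ℝ) *
    diagonal (fun i => (SignType.sign (hA.eigenvalues i) : ℝ)) *
    star (hA.eigenvectorUnitary : Matrix V V ℝ)

lemma trace_signMatrix_mul_self (hA : A.IsHermitian) :
    trace (hA.signMatrix * A) = hA.traceNorm := by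
  calc trace (hA.signMatrix * A)
      = trace (hA.signMatrix * ((hA.eigenvectorUnitary : Matrix V V ℝ) *
          diagonal hA.eigenvalues * star (hA.eigenvectorUnitary : Matrix V V ℝ))) := by
        rw [hA.conj_diagonal_eigenvalues]
    _ = hA.traceNorm := by
        simp only [signMatrix, trace_conj_diagonal_mul_conj_diagonal hA.eigenvectorUnitary.2,
          sign_mul_self, traceNorm]

lemma abs_trace_signMatrix_mul_le (hA : A.IsHermitian) (hB : B.IsHermitian) :
    |trace (hA.signMatrix * B)| ≤ hB.traceNorm := by
  rw [← congrArg (fun X => |trace (hA.signMatrix * X)|) hB.conj_diagonal_eigenvalues]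
  refine abs_trace_conj_diagonal_mul_conj_diagonal_le hA.eigenvectorUnitary.2
    hB.eigenvectorUnitary.2 (fun i => ?_) _
  rcases SignType.trichotomy (SignType.sign (hA.eigenvalues i)) with h | h | h <;> simp [h]

lemma abs_traceNorm_sub_traceNorm_le (hA : A.IsHermitian) (hB : B.IsHermitian)
    (hC : C.IsHermitian) (h : A = B + C) : |hA.traceNorm - hB.traceNorm| ≤ hC.traceNorm := by
  have hAle : hA.traceNorm ≤ hB.traceNorm + hC.traceNorm := by
    rw [← trace_signMatrix_mul_self hA, congrArg (fun X => trace (hA.signMatrix * X)) h,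
      Matrix.mul_add, trace_add]
    linarith [le_abs_self (trace (hA.signMatrix * B)), le_abs_self (trace (hA.signMatrix * C)),
      abs_trace_signMatrix_mul_le hA hB, abs_trace_signMatrix_mul_le hA hC]
  have hBle : hB.traceNorm ≤ hA.traceNorm + hC.traceNorm := by
    rw [← trace_signMatrix_mul_self hB,
      congrArg (fun X => trace (hB.signMatrix * X)) (eq_sub_of_add_eq h.symm), Matrix.mul_sub,
      trace_sub]
    linarith [le_abs_self (trace (hB.signMatrix * A)), neg_abs_le (trace (hB.signMatrix * C)),
      abs_trace_signMatrix_mul_le hB hA, abs_trace_signMatrix_mul_le hB hC]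
  exact abs_sub_le_iff.mpr ⟨by linarith, by linarith⟩

end Matrix.IsHermitian

lemma IsIdempotentElem.dotProduct_self {ι R : Type*} [Fintype ι] [NonUnitalNonAssocSemiring R]
    {v : ι → R} (hv : IsIdempotentElem v) : v ⬝ᵥ v = ∑ i, v i := by
  simp only [dotProduct, ← Pi.mul_apply, hv.eq]

section CliqueMatrix

open Polynomial

variable {u : V → ℝ}

lemma IsIdempotentElem.vecMulVec_mul_vecMulVec (hu : IsIdempotentElem u) :
    vecMulVec u u * vecMulVec u u = (∑ i, u i) • vecMulVec u u := by
  rw [Matrix.vecMulVec_mul_vecMulVec, hu.dotProduct_self, vecMulVec_smul]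

lemma IsIdempotentElem.vecMulVec_mul_diagonal (hu : IsIdempotentElem u) :
    vecMulVec u u * diagonal u = vecMulVec u u := by
  rw [vecMulVec_mul]
  congr 1
  ext i
  rw [vecMul_diagonal, ← Pi.mul_apply, hu.eq]

lemma IsIdempotentElem.diagonal_mul_vecMulVec (hu : IsIdempotentElem u) :
    diagonal u * vecMulVec u u = vecMulVec u u := by
  rw [mul_vecMulVec]
  congr 1
  ext i
  rw [mulVec_diagonal, ← Pi.mul_apply, hu.eq]

lemma IsIdempotentElem.diagonal_mul_diagonal (hu : IsIdempotentElem u) :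
    diagonal u * diagonal u = diagonal u := by
  rw [Matrix.diagonal_mul_diagonal]
  exact congrArg diagonal hu.eq

lemma IsIdempotentElem.trace_vecMulVec_sub_diagonal (hu : IsIdempotentElem u) :
    trace (vecMulVec u u - diagonal u) = 0 := by
  rw [trace_sub, trace_vecMulVec, trace_diagonal, hu.dotProduct_self, sub_self]

lemma IsIdempotentElem.vecMulVec_sub_diagonal_mul_self (hu : IsIdempotentElem u) :
    (vecMulVec u u - diagonal u) * (vecMulVec u u - diagonal u)
      = (∑ i, u i - 2) • vecMulVec u u + diagonal u := by
  simp only [Matrix.sub_mul, Matrix.mul_sub, hu.vecMulVec_mul_vecMulVec,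
    hu.vecMulVec_mul_diagonal, hu.diagonal_mul_vecMulVec, hu.diagonal_mul_diagonal, sub_smul]
  module

lemma IsIdempotentElem.trace_vecMulVec_sub_diagonal_mul_self (hu : IsIdempotentElem u) :
    trace ((vecMulVec u u - diagonal u) * (vecMulVec u u - diagonal u))
      = (∑ i, u i) ^ 2 - ∑ i, u i := by
  rw [hu.vecMulVec_sub_diagonal_mul_self, trace_add, trace_smul, trace_vecMulVec,
    trace_diagonal, hu.dotProduct_self, smul_eq_mul]
  ring

lemma IsIdempotentElem.aeval_vecMulVec_sub_diagonal (hu : IsIdempotentElem u) :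
    aeval (vecMulVec u u - diagonal u) (X * (X + 1) * (X - C (∑ i, u i - 1))) = 0 := by
  have hA1 : (vecMulVec u u - diagonal u) * (vecMulVec u u - diagonal u + 1)
      = (∑ i, u i - 1) • vecMulVec u u := by
    rw [Matrix.mul_add, hu.vecMulVec_sub_diagonal_mul_self, Matrix.mul_one]
    module
  simp only [map_mul, map_add, map_sub, aeval_X, aeval_C, map_one, hA1,
    Algebra.algebraMap_eq_smul_one, smul_mul_assoc, Matrix.mul_sub, Matrix.mul_smul,
    Matrix.mul_one, hu.vecMulVec_mul_vecMulVec, hu.vecMulVec_mul_diagonal]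
  module

lemma Matrix.IsHermitian.traceNorm_eq_of_eq_vecMulVec_sub_diagonal {A : Matrix V V ℝ}
    (hA : A.IsHermitian) (hu : IsIdempotentElem u) (hk : 1 ≤ ∑ i, u i)
    (hAu : A = vecMulVec u u - diagonal u) : hA.traceNorm = 2 * ∑ i, u i - 2 := by
  subst hAu
  set k := ∑ i, u i
  have hk0 : k ≠ 0 := by linarith
  have hroots (i : V) :
      hA.eigenvalues i = 0 ∨ hA.eigenvalues i = -1 ∨ hA.eigenvalues i = k - 1 := by
    have := hA.eval_eigenvalues_eq_zero hu.aeval_vecMulVec_sub_diagonal i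
    simp only [eval_mul, eval_add, eval_sub, eval_X, eval_C, eval_one, mul_eq_zero] at this
    rcases this with (h | h) | h
    exacts [Or.inl h, Or.inr (Or.inl (eq_neg_of_add_eq_zero_left h)),
      Or.inr (Or.inr (sub_eq_zero.mp h))]
  -- the quadratic through the three points `(0, 0)`, `(-1, 1)`, `(k - 1, k - 1)`
  have habs (i : V) :
      |hA.eigenvalues i| = (2 * hA.eigenvalues i ^ 2 + (2 - k) * hA.eigenvalues i) / k := by
    rcases hroots i with h | h | h <;> rw [h]
    · simp
    · field_simp; norm_num
    · rw [abs_of_nonneg (by linarith)]; field_simp; ring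
  have htrace : ∑ i, hA.eigenvalues i = 0 := by
    simpa using hA.trace_eq_sum_eigenvalues.symm.trans hu.trace_vecMulVec_sub_diagonal
  calc hA.traceNorm
      = (2 * ∑ i, hA.eigenvalues i ^ 2 + (2 - k) * ∑ i, hA.eigenvalues i) / k := by
        simp only [traceNorm, habs, ← Finset.sum_div, Finset.sum_add_distrib, Finset.mul_sum]
    _ = 2 * k - 2 := by
        rw [hA.sum_sq_eigenvalues, hu.trace_vecMulVec_sub_diagonal_mul_self, htrace]
        field_simp
        ring

end CliqueMatrix

lemma adjacencyMatrix_add (a b : Multiset (Finset V)) :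
    adjacencyMatrix (a + b) = adjacencyMatrix a + adjacencyMatrix b := by
  ext i j
  by_cases h : i = j <;> simp [adjacencyMatrix, h, Multiset.filter_add]

lemma adjacencyMatrix_singleton (e : Finset V) :
    adjacencyMatrix {e} = vecMulVec ((e : Set V).indicator 1) ((e : Set V).indicator 1)
      - diagonal ((e : Set V).indicator 1) := by
  ext i j
  by_cases h : i = j
  · subst h
    by_cases hi : i ∈ e <;> simp [adjacencyMatrix, vecMulVec_apply, hi]
  · by_cases hi : i ∈ e <;> by_cases hj : j ∈ e <;>
      simp [adjacencyMatrix, vecMulVec_apply, h, hi, hj, Multiset.filter_singleton]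

lemma abs_energy_add_sub_energy_le (a b : Multiset (Finset V)) :
    |energy (a + b) - energy a| ≤ energy b :=
  Matrix.IsHermitian.abs_traceNorm_sub_traceNorm_le _ _ _ (adjacencyMatrix_add a b)

lemma energy_singleton {e : Finset V} (he : e.Nonempty) :
    energy {e} = 2 * (e.card : ℝ) - 2 := by
  have hsum : ∑ i, (e : Set V).indicator (1 : V → ℝ) i = e.card := by
    simp [Set.indicator_apply]
  rw [← hsum]
  refine (adjacency_isHermitian _).traceNorm_eq_of_eq_vecMulVec_sub_diagonal ?_ ?_
    (adjacencyMatrix_singleton e)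
  · ext i
    by_cases hi : i ∈ e <;> simp [hi]
  · exact hsum ▸ Nat.one_le_cast.mpr he.card_pos

/-- deleting an edge `e` changes the energy by at most `2|e| - 2`. -/
theorem stmt_12 (E : Finset (Finset V)) (hcard : ∀ e ∈ E, 2 ≤ e.card)
    (e : Finset V) (he : e ∈ E) :
    |energy E.val - energy ((E.erase e).val)| ≤ 2 * (e.card : ℝ) - 2 := by
  have hsplit : E.val = (E.erase e).val + {e} := by
    rw [Finset.erase_val, add_comm, Multiset.singleton_add,
      Multiset.cons_erase (Finset.mem_def.mp he)]
  have he_nonempty : e.Nonempty := Finset.card_pos.mp (by linarith [hcard e he])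
  rw [← energy_singleton he_nonempty, hsplit]
  exact abs_energy_add_sub_energy_le _ _
end

section
/- Let H be a hypergraph with rank r (maximal edge cardinality), n vertices, and m edges. Then E(H) ≤ √(n(r-1)Z(H)) ≤ √(nm(r² - r)Δ), where Z(H) = Σ_v d(v)² is the Zagreb index and Δ the maximum degree. -/
open Matrix BigOperators

set_option linter.unusedSectionVars false

variable {V : Type*} [Fintype V] [DecidableEq V]

/-!
Writing `λᵢ` for the adjacency eigenvalues, Cauchy–Schwarz gives `E(H)² ≤ n ∑ λᵢ² = n Tr(A²)`,
and `Tr(A²) = ∑ᵢ ∑ⱼ d({i,j})²`. In row `i` each codegree is at most `d(i)`, while the row sum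
`∑_{j ≠ i} d({i,j}) = ∑_{e ∋ i} (|e| - 1)` is at most `(r - 1) d(i)`;
hence `Tr(A²) ≤ (r - 1) Z(H)`.
Finally `Z(H) ≤ Δ ∑ᵥ d(v) = Δ ∑ₑ |e| ≤ Δ r m`.
-/

theorem Matrix.IsHermitian.trace_mul_self {𝕜 n : Type*} [RCLike 𝕜] [Fintype n] [DecidableEq n]
    {A : Matrix n n 𝕜} (hA : A.IsHermitian) :
    (A * A).trace = ∑ i, (hA.eigenvalues i : 𝕜) ^ 2 := by
  conv_lhs => rw [hA.spectral_theorem, ← map_mul, Unitary.conjStarAlgAut_apply, trace_mul_cycle,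
    Unitary.coe_star_mul_self, one_mul, diagonal_mul_diagonal, trace_diagonal]
  simp [sq]

theorem Matrix.IsHermitian.sum_abs_eigenvalues_le_sqrt {n : Type*} [Fintype n] [DecidableEq n]
    {A : Matrix n n ℝ} (hA : A.IsHermitian) :
    ∑ i, |hA.eigenvalues i| ≤ √(Fintype.card n * (A * A).trace) := by
  refine Real.le_sqrt_of_sq_le ?_
  simpa [hA.trace_mul_self] using
    sq_sum_le_card_mul_sum_sq (s := Finset.univ) (f := fun i => |hA.eigenvalues i|)

/-- The codegree `d({i,j})`. -/
def codegree (E : Multiset (Finset V)) (i j : V) : ℕ :=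
  (E.filter (fun e => i ∈ e ∧ j ∈ e)).card

lemma codegree_cons (e : Finset V) (E : Multiset (Finset V)) (i j : V) :
    codegree (e ::ₘ E) i j = codegree E i j + if i ∈ e ∧ j ∈ e then 1 else 0 := by
  unfold codegree; split_ifs with h <;> simp [h, add_comm]

lemma hdegree_cons (e : Finset V) (E : Multiset (Finset V)) (v : V) :
    hdegree (e ::ₘ E) v = hdegree E v + if v ∈ e then 1 else 0 := by
  unfold hdegree; split_ifs with h <;> simp [h, add_comm]

lemma codegree_le_hdegree (E : Multiset (Finset V)) (i j : V) : codegree E i j ≤ hdegree E i :=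
  Multiset.card_le_card (Multiset.monotone_filter_right E fun _ h => h.1)

lemma sum_hdegree (E : Multiset (Finset V)) : ∑ v, hdegree E v = (E.map Finset.card).sum := by
  induction E using Multiset.induction_on with
  | empty => simp [hdegree]
  | cons e E ih => simp [hdegree_cons, Finset.sum_add_distrib, ih, add_comm]

lemma sum_codegree (E : Multiset (Finset V)) (i : V) :
    ∑ j ∈ Finset.univ.erase i, codegree E i j =
      ((E.filter (i ∈ ·)).map fun e => e.card - 1).sum := by
  induction E using Multiset.induction_on with
  | empty => simp [codegree]
  | cons e E ih =>
    by_cases hi : i ∈ e <;> simp [codegree_cons, Finset.sum_add_distrib, ih, hi, add_comm]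

lemma sum_codegree_le {E : Multiset (Finset V)} {r : ℕ} (hr : ∀ e ∈ E, e.card ≤ r) (i : V) :
    ∑ j ∈ Finset.univ.erase i, (codegree E i j : ℝ) ≤ ((r : ℝ) - 1) * hdegree E i := by
  rw [← Nat.cast_sum, sum_codegree, Nat.cast_multiset_sum, Multiset.map_map]
  calc ((E.filter (i ∈ ·)).map fun e => ((e.card - 1 : ℕ) : ℝ)).sum
      ≤ ((E.filter (i ∈ ·)).map fun _ => (r : ℝ) - 1).sum := by
        refine Multiset.sum_map_le_sum_map _ _ fun e he => ?_
        obtain ⟨he, hi⟩ := Multiset.mem_filter.mp he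
        rw [Nat.cast_pred (Finset.card_pos.mpr ⟨i, hi⟩)]
        exact sub_le_sub_right (by exact_mod_cast hr e he) 1
    _ = ((r : ℝ) - 1) * hdegree E i := by simp [hdegree, mul_comm]

lemma adjacencyMatrix_apply_self (E : Multiset (Finset V)) (i : V) :
    adjacencyMatrix E i i = 0 := by
  simp [adjacencyMatrix]

lemma adjacencyMatrix_apply_of_ne (E : Multiset (Finset V)) {i j : V} (h : i ≠ j) :
    adjacencyMatrix E i j = codegree E i j := by
  simp [adjacencyMatrix, codegree, h]

lemma sum_sq_adjacencyMatrix_le {E : Multiset (Finset V)} {r : ℕ} (hr : ∀ e ∈ E, e.card ≤ r)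
    (i : V) : ∑ j, adjacencyMatrix E i j ^ 2 ≤ ((r : ℝ) - 1) * hdegree E i ^ 2 := by
  rw [← Finset.sum_erase _ (a := i) (by simp [adjacencyMatrix_apply_self])]
  calc ∑ j ∈ Finset.univ.erase i, adjacencyMatrix E i j ^ 2
      = ∑ j ∈ Finset.univ.erase i, (codegree E i j : ℝ) * codegree E i j := by
        refine Finset.sum_congr rfl fun j hj => ?_
        rw [adjacencyMatrix_apply_of_ne E (Finset.ne_of_mem_erase hj).symm, sq]
    _ ≤ ∑ j ∈ Finset.univ.erase i, (hdegree E i : ℝ) * codegree E i j := by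
        gcongr with j
        exact_mod_cast codegree_le_hdegree E i j
    _ ≤ hdegree E i * (((r : ℝ) - 1) * hdegree E i) := by
        rw [← Finset.mul_sum]
        exact mul_le_mul_of_nonneg_left (sum_codegree_le hr i) (Nat.cast_nonneg _)
    _ = ((r : ℝ) - 1) * hdegree E i ^ 2 := by ring

lemma trace_adjacencyMatrix_mul_self_le {E : Multiset (Finset V)} {r : ℕ}
    (hr : ∀ e ∈ E, e.card ≤ r) :
    (adjacencyMatrix E * adjacencyMatrix E).trace ≤ ((r : ℝ) - 1) * zagreb E := by
  have hsymm (i j : V) : adjacencyMatrix E j i = adjacencyMatrix E i j := by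
    simpa using congrFun₂ (adjacency_isHermitian E) i j
  calc (adjacencyMatrix E * adjacencyMatrix E).trace = ∑ i, ∑ j, adjacencyMatrix E i j ^ 2 := by
        simp [Matrix.trace, Matrix.mul_apply, hsymm, sq]
    _ ≤ ∑ i, ((r : ℝ) - 1) * hdegree E i ^ 2 :=
        Finset.sum_le_sum fun i _ => sum_sq_adjacencyMatrix_le hr i
    _ = ((r : ℝ) - 1) * zagreb E := by simp [zagreb, Finset.mul_sum]

lemma zagreb_le_mul_card_mul {E : Multiset (Finset V)} {r Δ : ℕ} (hr : ∀ e ∈ E, e.card ≤ r)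
    (hΔ : ∀ v, hdegree E v ≤ Δ) : zagreb E ≤ Δ * (Multiset.card E * r) :=
  calc zagreb E ≤ ∑ v, Δ * hdegree E v := Finset.sum_le_sum fun v _ => by
        rw [sq]; exact Nat.mul_le_mul_right _ (hΔ v)
    _ = Δ * (E.map Finset.card).sum := by rw [← Finset.mul_sum, sum_hdegree]
    _ ≤ Δ * (Multiset.card E * r) := by
        gcongr
        simpa using Multiset.sum_le_card_nsmul (E.map Finset.card) r (by simpa using hr)

lemma sub_one_mul_zagreb_le {E : Multiset (Finset V)} {r Δ : ℕ} (hr : ∀ e ∈ E, e.card ≤ r)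
    (hΔ : ∀ v, hdegree E v ≤ Δ) :
    ((r : ℝ) - 1) * zagreb E ≤ Multiset.card E * ((r : ℝ) ^ 2 - r) * Δ := by
  have hZ : (zagreb E : ℝ) ≤ Δ * (Multiset.card E * r) := by
    exact_mod_cast zagreb_le_mul_card_mul hr hΔ
  rcases Nat.eq_zero_or_pos r with rfl | hr0
  · -- `hZ` forces `Z(H) = 0`, which matters since `(r : ℝ) - 1 < 0` here
    simp_all
  · have hr1 : (0 : ℝ) ≤ r - 1 := sub_nonneg.mpr (by exact_mod_cast hr0)
    exact (mul_le_mul_of_nonneg_left hZ hr1).trans_eq (by ring)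

theorem stmt_17_general (E : Finset (Finset V))
    (r : ℕ) (hr : ∀ e ∈ E, e.card ≤ r)
    (Δ : ℕ) (hΔ : ∀ v : V, hdegree E.val v ≤ Δ) :
    energy E.val ≤
      Real.sqrt ((Fintype.card V : ℝ) * ((r : ℝ) - 1) * (zagreb E.val : ℝ)) ∧
    Real.sqrt ((Fintype.card V : ℝ) * ((r : ℝ) - 1) * (zagreb E.val : ℝ)) ≤
      Real.sqrt ((Fintype.card V : ℝ) * (E.card : ℝ) * ((r : ℝ) ^ 2 - (r : ℝ)) * (Δ : ℝ)) := by
  have hn : (0 : ℝ) ≤ Fintype.card V := Nat.cast_nonneg _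
  refine ⟨(adjacency_isHermitian E.val).sum_abs_eigenvalues_le_sqrt.trans ?_, ?_⟩
  · rw [mul_assoc]
    exact Real.sqrt_le_sqrt (mul_le_mul_of_nonneg_left (trace_adjacencyMatrix_mul_self_le hr) hn)
  · have h := mul_le_mul_of_nonneg_left (sub_one_mul_zagreb_le hr hΔ) hn
    exact Real.sqrt_le_sqrt (by simpa only [mul_assoc, Finset.card_val] using h)

/-- for a hypergraph with `n` vertices, `m` edges, rank `r` and maximum
degree `Δ`: `E(H) ≤ √(n(r-1)Z(H)) ≤ √(nm(r²-r)Δ)` where `Z` is the Zagreb index. -/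
theorem stmt_17 (E : Finset (Finset V)) (hcard : ∀ e ∈ E, 2 ≤ e.card)
    (r : ℕ) (hr : ∀ e ∈ E, e.card ≤ r)
    (Δ : ℕ) (hΔ : ∀ v : V, hdegree E.val v ≤ Δ) :
    energy E.val ≤
      Real.sqrt ((Fintype.card V : ℝ) * ((r : ℝ) - 1) * (zagreb E.val : ℝ)) ∧
    Real.sqrt ((Fintype.card V : ℝ) * ((r : ℝ) - 1) * (zagreb E.val : ℝ)) ≤
      Real.sqrt ((Fintype.card V : ℝ) * (E.card : ℝ) * ((r : ℝ) ^ 2 - (r : ℝ)) * (Δ : ℝ)) :=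
  stmt_17_general E r hr Δ hΔ
end
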